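/- arXiv:1811.08016 — 8 statements merged into one kernel-verified Lean document; each statement's English description precedes it below -/
import Mathlib

section
/- Let W : ℝ → [0,∞) be continuous with finite zero set Z, suppose there exist z₁, z₂ ∈ Z with z₁ < 0 < z₂, suppose 0 ∉ Z (so W(0) > 0), and suppose there are constants c₁,c₂,c₃ > 0 and p ∈ (1,∞) with c₁|s|^p − c₂ ≤ W(s) ≤ c₃(|s|^p + 1) for all s ∈ ℝ. Then the infimum over all u ∈ W^{1,p}₀(0,1) (absolutely continuous u : [0,1] → ℝ with u(0) = u(1) = 0 and u′ ∈ L^p(0,1)) of the functional E(u) = ∫₀¹ (W(u′(x)) + u(x)²) dx equals 0, and this infimum is not attained by any u ∈ W^{1,p}₀(0,1). -/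
open MeasureTheory Set Filter

/-! Zigzags approach the infimum: the `1`-periodic slope equal to `z₂` on `[0, t)` and to `z₁`
on `[t, 1)`, with `t` chosen so that its mean vanishes, has a periodic primitive, and rescaling
it by `N` gives admissible `u_N` with `W (u_N') = 0` and `|u_N| ≤ max |z₁| |z₂| / N`, so
`E(u_N) → 0`. Conversely, `E(u) = 0` forces `u = 0` and `W (u') = 0` a.e.; as `u` is a primitive
of `u'`, the Lebesgue differentiation theorem gives `u' = 0` a.e., contradicting `W 0 ≠ 0`. -/

/-- `u ∈ W^{1,p}₀(0,1)`: `u` is absolutely continuous on `[0,1]` with derivative `u'`,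
`u(0) = u(1) = 0`, and `u' ∈ L^p(0,1)`. -/
def AdmissibleW1p0 (p : ℝ) (u u' : ℝ → ℝ) : Prop :=
  u 0 = 0 ∧ u 1 = 0 ∧
  (∀ x ∈ Set.Icc (0:ℝ) 1, u x = ∫ t in (0:ℝ)..x, u' t) ∧
  IntervalIntegrable u' volume 0 1 ∧
  IntervalIntegrable (fun x => |u' x| ^ p) volume 0 1

/-- The energy `E(u) = ∫₀¹ (W(u'(x)) + u(x)²) dx`. -/
noncomputable def energyE (W : ℝ → ℝ) (u u' : ℝ → ℝ) : ℝ :=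
  ∫ x in (0:ℝ)..1, (W (u' x) + (u x) ^ 2)

namespace Function.Periodic

variable {f : ℝ → ℝ} {T : ℝ}

theorem primitive_periodic (hf : Periodic f T)
    (hint : ∀ a b, IntervalIntegrable f volume a b) (hmean : ∫ t in (0:ℝ)..T, f t = 0) :
    Periodic (fun x => ∫ t in (0:ℝ)..x, f t) T := fun x => by
  simp only [hf.intervalIntegral_add_eq_add 0 x hint, zero_add, hmean, add_zero]

theorem abs_primitive_le (hf : Periodic f T) (hT : 0 < T)
    (hint : ∀ a b, IntervalIntegrable f volume a b) (hmean : ∫ t in (0:ℝ)..T, f t = 0)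
    {M : ℝ} (hM : ∀ x, |f x| ≤ M) (x : ℝ) :
    |∫ t in (0:ℝ)..x, f t| ≤ M * T := by
  obtain ⟨y, hy, hxy⟩ := (hf.primitive_periodic hint hmean).exists_mem_Ico₀ hT x
  calc |∫ t in (0:ℝ)..x, f t| = |∫ t in (0:ℝ)..y, f t| := congrArg abs hxy
    _ ≤ M * |y - 0| := by
      simpa only [Real.norm_eq_abs] using
        intervalIntegral.norm_integral_le_of_norm_le_const (f := f) fun t _ => hM t
    _ ≤ M * T := by
      rw [sub_zero, abs_of_nonneg hy.1]
      exact mul_le_mul_of_nonneg_left hy.2.le ((abs_nonneg _).trans (hM 0))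

theorem integral_comp_nat_mul_eq_zero (hf : Periodic f 1)
    (hint : ∀ a b, IntervalIntegrable f volume a b) (hmean : ∫ t in (0:ℝ)..1, f t = 0)
    {N : ℕ} (hN : N ≠ 0) : ∫ x in (0:ℝ)..1, f (N * x) = 0 := by
  have hperiod : ∫ t in (0:ℝ)..N, f t = 0 := by
    simpa using (hf.primitive_periodic hint hmean).nat_mul_eq N
  rw [intervalIntegral.integral_comp_mul_left _ (Nat.cast_ne_zero.2 hN), mul_zero, mul_one,
    hperiod, smul_zero]

theorem abs_integral_comp_nat_mul_le (hf : Periodic f 1)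
    (hint : ∀ a b, IntervalIntegrable f volume a b) (hmean : ∫ t in (0:ℝ)..1, f t = 0)
    {M : ℝ} (hM : ∀ x, |f x| ≤ M) {N : ℕ} (hN : N ≠ 0) (x : ℝ) :
    |∫ t in (0:ℝ)..x, f (N * t)| ≤ M / N := by
  have hN' : (0:ℝ) < N := Nat.cast_pos.2 (Nat.pos_of_ne_zero hN)
  rw [intervalIntegral.integral_comp_mul_left _ hN'.ne', mul_zero, smul_eq_mul, abs_mul,
    abs_inv, abs_of_pos hN', inv_mul_eq_div, div_le_div_iff_of_pos_right hN']
  simpa using hf.abs_primitive_le one_pos hint hmean hM (N * x)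

end Function.Periodic

noncomputable def stepSlope (a b t : ℝ) (y : ℝ) : ℝ := if Int.fract y < t then b else a

namespace stepSlope

variable {a b t : ℝ}

theorem periodic : Function.Periodic (stepSlope a b t) 1 := fun y => by
  simp [stepSlope, Int.fract_add_one]

theorem measurable : Measurable (stepSlope a b t) :=
  Measurable.ite (measurableSet_lt measurable_fract measurable_const)
    measurable_const measurable_const

theorem eq_or_eq (y : ℝ) : stepSlope a b t y = a ∨ stepSlope a b t y = b := by
  unfold stepSlope; split_ifs <;> simp

theorem abs_le (y : ℝ) : |stepSlope a b t y| ≤ max |a| |b| := by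
  rcases eq_or_eq (a := a) (b := b) (t := t) y with h | h <;> rw [h]
  exacts [le_max_left _ _, le_max_right _ _]

theorem intervalIntegrable (c d : ℝ) : IntervalIntegrable (stepSlope a b t) volume c d :=
  intervalIntegrable_const.mono_fun' measurable.aestronglyMeasurable (ae_of_all _ abs_le)

theorem integral_eq (ht₀ : 0 ≤ t) (ht₁ : t ≤ 1) :
    ∫ y in (0:ℝ)..1, stepSlope a b t y = t * b + (1 - t) * a := by
  have hb : ∫ y in (0:ℝ)..t, stepSlope a b t y = ∫ _ in (0:ℝ)..t, b := by
    refine intervalIntegral.integral_congr_ae ?_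
    filter_upwards [volume.ae_ne t] with y hyt hy
    rw [uIoc_of_le ht₀] at hy
    have hlt : y < t := lt_of_le_of_ne hy.2 hyt
    simp [stepSlope, Int.fract_eq_self.2 ⟨hy.1.le, hlt.trans_le ht₁⟩, hlt]
  have ha : ∫ y in t..1, stepSlope a b t y = ∫ _ in t..1, a := by
    refine intervalIntegral.integral_congr_ae ?_
    filter_upwards [volume.ae_ne 1] with y hy1 hy
    rw [uIoc_of_le ht₁] at hy
    have hfract : Int.fract y = y :=
      Int.fract_eq_self.2 ⟨ht₀.trans hy.1.le, lt_of_le_of_ne hy.2 hy1⟩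
    simp [stepSlope, hfract, hy.1.le.not_gt]
  rw [← intervalIntegral.integral_add_adjacent_intervals (intervalIntegrable 0 t)
    (intervalIntegrable t 1), hb, ha]
  simp

end stepSlope

theorem admissibleW1p0_primitive {p : ℝ} {g : ℝ → ℝ} (hg : IntervalIntegrable g volume 0 1)
    (hgp : IntervalIntegrable (fun x => |g x| ^ p) volume 0 1)
    (hmean : ∫ t in (0:ℝ)..1, g t = 0) :
    AdmissibleW1p0 p (fun x => ∫ t in (0:ℝ)..x, g t) g :=
  ⟨intervalIntegral.integral_same, hmean, fun _ _ => rfl, hg, hgp⟩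

theorem energyE_nonneg {W : ℝ → ℝ} (hW : ∀ s, 0 ≤ W s) (u u' : ℝ → ℝ) :
    0 ≤ energyE W u u' :=
  intervalIntegral.integral_nonneg zero_le_one fun _ _ => add_nonneg (hW _) (sq_nonneg _)

theorem energyE_le_sq_of_abs_le {W u u' : ℝ → ℝ} {C : ℝ} (hW : ∀ x, W (u' x) = 0)
    (hu : ∀ x, |u x| ≤ C) :
    energyE W u u' ≤ C ^ 2 := by
  have hbound : ∀ x ∈ uIoc (0:ℝ) 1, ‖W (u' x) + u x ^ 2‖ ≤ C ^ 2 := fun x _ => by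
    rw [hW, zero_add, Real.norm_eq_abs, abs_pow]
    exact pow_le_pow_left₀ (abs_nonneg _) (hu x) 2
  calc energyE W u u' ≤ ‖energyE W u u'‖ := Real.le_norm_self _
    _ ≤ C ^ 2 * |1 - 0| := intervalIntegral.norm_integral_le_of_norm_le_const hbound
    _ = C ^ 2 := by norm_num

theorem exists_admissibleW1p0_energyE_lt {W : ℝ → ℝ} {p z₁ z₂ : ℝ} (hz₁ : W z₁ = 0)
    (hz₂ : W z₂ = 0) (hz₁neg : z₁ < 0) (hz₂pos : 0 < z₂) {ε : ℝ} (hε : 0 < ε) :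
    ∃ u u' : ℝ → ℝ, AdmissibleW1p0 p u u' ∧ energyE W u u' < ε := by
  set t := z₁ / (z₁ - z₂) with ht
  have ht₀ : 0 ≤ t := div_nonneg_of_nonpos hz₁neg.le (by linarith)
  have ht₁ : t ≤ 1 := (div_le_one_of_neg (by linarith)).2 (by linarith)
  have hmean : ∫ y in (0:ℝ)..1, stepSlope z₁ z₂ t y = 0 := by
    rw [stepSlope.integral_eq ht₀ ht₁, ht]
    field_simp [show z₁ - z₂ ≠ 0 by linarith]
    ring
  set M := max |z₁| |z₂|
  obtain ⟨N, hN, hsmall⟩ : ∃ N : ℕ, N ≠ 0 ∧ (M / N) ^ 2 < ε := by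
    have hlim := (tendsto_const_div_atTop_nhds_zero_nat M).pow 2
    rw [zero_pow two_ne_zero] at hlim
    exact ((eventually_ne_atTop 0).and (hlim.eventually (gt_mem_nhds hε))).exists
  set g := fun x => stepSlope z₁ z₂ t (N * x)
  have hg_meas : Measurable g := stepSlope.measurable.comp (measurable_const_mul _)
  have hgp : ∀ x, |g x| ^ p ≤ max (|z₁| ^ p) (|z₂| ^ p) := fun x => by
    rcases stepSlope.eq_or_eq (a := z₁) (b := z₂) (t := t) (N * x) with h | h <;>
      simp only [g, h]
    exacts [le_max_left _ _, le_max_right _ _]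
  refine ⟨_, g, admissibleW1p0_primitive ?_ ?_ ?_,
    (energyE_le_sq_of_abs_le ?_ ?_).trans_lt hsmall⟩
  · exact intervalIntegrable_const.mono_fun' hg_meas.aestronglyMeasurable
      (ae_of_all _ fun x => stepSlope.abs_le (N * x))
  · refine (intervalIntegrable_const (c := max (|z₁| ^ p) (|z₂| ^ p))).mono_fun'
      (hg_meas.abs.pow_const p).aestronglyMeasurable (ae_of_all _ fun x => ?_)
    simpa [abs_of_nonneg (Real.rpow_nonneg (abs_nonneg _) p)] using hgp x
  · exact stepSlope.periodic.integral_comp_nat_mul_eq_zero stepSlope.intervalIntegrable hmean hN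
  · intro x
    rcases stepSlope.eq_or_eq (a := z₁) (b := z₂) (t := t) (N * x) with h | h <;>
      simp only [g, h, hz₁, hz₂]
  · exact stepSlope.periodic.abs_integral_comp_nat_mul_le stepSlope.intervalIntegrable hmean
      stepSlope.abs_le hN

open scoped Topology in
theorem ae_eq_zero_of_forall_intervalIntegral_eq_zero {E : Type*} [NormedAddCommGroup E]
    [NormedSpace ℝ E] [CompleteSpace E] {f : ℝ → E} {a b : ℝ}
    (hf : IntervalIntegrable f volume a b) (h : ∀ x ∈ Icc a b, ∫ t in a..x, f t = 0) :
    ∀ᵐ x, x ∈ Ioo a b → f x = 0 := by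
  filter_upwards [hf.ae_hasDerivAt_integral] with x hx hxab
  have hderiv := hx (Icc_subset_uIcc (Ioo_subset_Icc_self hxab)) a left_mem_uIcc
  have hzero : (fun y => ∫ t in a..y, f t) =ᶠ[𝓝 x] fun _ => 0 :=
    eventually_of_mem (Icc_mem_nhds hxab.1 hxab.2) h
  exact hderiv.unique ((hasDerivAt_const x 0).congr_of_eventuallyEq hzero)

namespace AdmissibleW1p0

variable {p : ℝ} {u u' : ℝ → ℝ}

theorem continuousOn (hu : AdmissibleW1p0 p u u') : ContinuousOn u (Icc 0 1) := by
  obtain ⟨-, -, hprim, hint, -⟩ := hu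
  have := intervalIntegral.continuousOn_primitive_interval' hint left_mem_uIcc
  rw [uIcc_of_le zero_le_one] at this
  exact this.congr hprim

theorem ae_deriv_eq_zero (hu : AdmissibleW1p0 p u u') (h : ∀ᵐ x, x ∈ Ioo 0 1 → u x = 0) :
    ∀ᵐ x, x ∈ Ioo 0 1 → u' x = 0 := by
  have hae : u =ᵐ[volume.restrict (Icc 0 1)] 0 := by
    rw [Measure.restrict_congr_set Ioo_ae_eq_Icc.symm]
    exact (ae_restrict_iff' measurableSet_Ioo).2 h
  have hzero := Measure.eqOn_of_ae_eq hae hu.continuousOn continuousOn_const (by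
    rw [interior_Icc, closure_Ioo zero_ne_one])
  obtain ⟨-, -, hprim, hint, -⟩ := hu
  refine ae_eq_zero_of_forall_intervalIntegral_eq_zero hint fun x hx => ?_
  rw [← hprim x hx]
  exact hzero hx

theorem intervalIntegrable_energy {W : ℝ → ℝ} {c : ℝ} (hu : AdmissibleW1p0 p u u')
    (hW : Continuous W) (hW_nonneg : ∀ s, 0 ≤ W s) (hub : ∀ s, W s ≤ c * (|s| ^ p + 1)) :
    IntervalIntegrable (fun x => W (u' x) + u x ^ 2) volume 0 1 := by
  have hsq : IntervalIntegrable (fun x => u x ^ 2) volume 0 1 :=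
    (hu.continuousOn.pow 2).intervalIntegrable_of_Icc zero_le_one
  obtain ⟨-, -, -, hint, hint_p⟩ := hu
  have hdom : IntervalIntegrable (fun x => c * (|u' x| ^ p + 1)) volume 0 1 :=
    (hint_p.add intervalIntegrable_const).const_mul c
  refine IntervalIntegrable.add (hdom.mono_fun' (hW.comp_aestronglyMeasurable
    hint.aestronglyMeasurable_restrict_uIoc) (ae_of_all _ fun x => ?_)) hsq
  dsimp only
  rw [Real.norm_eq_abs, abs_of_nonneg (hW_nonneg _)]
  exact hub _

theorem energyE_ne_zero {W : ℝ → ℝ} {c : ℝ} (hu : AdmissibleW1p0 p u u') (hW : Continuous W)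
    (hW_nonneg : ∀ s, 0 ≤ W s) (hub : ∀ s, W s ≤ c * (|s| ^ p + 1)) (h0 : W 0 ≠ 0) :
    energyE W u u' ≠ 0 := by
  intro hE
  have hvanish : ∀ᵐ x, x ∈ Ioo 0 1 → W (u' x) = 0 ∧ u x = 0 := by
    have := (intervalIntegral.integral_eq_zero_iff_of_le_of_nonneg_ae zero_le_one
      (ae_of_all _ fun x => add_nonneg (hW_nonneg (u' x)) (sq_nonneg (u x)))
      (hu.intervalIntegrable_energy hW hW_nonneg hub)).1 hE
    filter_upwards [(ae_restrict_iff' measurableSet_Ioc).1 this] with x hx hxI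
    have := hx (Ioo_subset_Ioc_self hxI)
    rw [Pi.zero_apply, add_eq_zero_iff_of_nonneg (hW_nonneg _) (sq_nonneg _)] at this
    exact ⟨this.1, pow_eq_zero_iff two_ne_zero |>.1 this.2⟩
  have hu' := hu.ae_deriv_eq_zero (hvanish.mono fun x hx hxI => (hx hxI).2)
  have hnull : volume (Ioo (0:ℝ) 1) = 0 := by
    refine measure_eq_zero_iff_ae_notMem.2 ?_
    filter_upwards [hvanish, hu'] with x hW' hu'x hx
    exact h0 (hu'x hx ▸ (hW' hx).1)
  simp at hnull

end AdmissibleW1p0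

theorem statement0_general
    (W : ℝ → ℝ) (p c₃ z₁ z₂ : ℝ)
    (hW_cont : Continuous W) (hW_nonneg : ∀ s, 0 ≤ W s)
    (hz₁ : W z₁ = 0) (hz₂ : W z₂ = 0) (hz₁neg : z₁ < 0) (hz₂pos : 0 < z₂)
    (h0 : W 0 ≠ 0)
    (hub : ∀ s, W s ≤ c₃ * (|s| ^ p + 1)) :
    sInf {e : ℝ | ∃ u u' : ℝ → ℝ, AdmissibleW1p0 p u u' ∧ e = energyE W u u'} = 0 ∧
    (0:ℝ) ∉ {e : ℝ | ∃ u u' : ℝ → ℝ, AdmissibleW1p0 p u u' ∧ e = energyE W u u'} := by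
  set S := {e : ℝ | ∃ u u' : ℝ → ℝ, AdmissibleW1p0 p u u' ∧ e = energyE W u u'}
  have hS_nonneg : ∀ e ∈ S, 0 ≤ e := by
    rintro _ ⟨u, u', -, rfl⟩
    exact energyE_nonneg hW_nonneg u u'
  have hS_small : ∀ ε > 0, ∃ e ∈ S, e < ε := fun ε hε => by
    obtain ⟨u, u', hu, hlt⟩ :=
      exists_admissibleW1p0_energyE_lt hz₁ hz₂ hz₁neg hz₂pos (p := p) hε
    exact ⟨_, ⟨u, u', hu, rfl⟩, hlt⟩
  obtain ⟨e, he, -⟩ := hS_small 1 one_pos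
  refine ⟨csInf_eq_of_forall_ge_of_forall_gt_exists_lt ⟨e, he⟩ hS_nonneg hS_small, ?_⟩
  rintro ⟨u, u', hu, hE⟩
  exact hu.energyE_ne_zero hW_cont hW_nonneg hub h0 hE.symm

theorem statement0
    (W : ℝ → ℝ) (p c₁ c₂ c₃ z₁ z₂ : ℝ)
    (hW_cont : Continuous W) (hW_nonneg : ∀ s, 0 ≤ W s)
    (hZ_fin : {s : ℝ | W s = 0}.Finite)
    (hz₁ : W z₁ = 0) (hz₂ : W z₂ = 0) (hz₁neg : z₁ < 0) (hz₂pos : 0 < z₂)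
    (h0 : W 0 ≠ 0)
    (hc₁ : 0 < c₁) (hc₂ : 0 < c₂) (hc₃ : 0 < c₃) (hp : 1 < p)
    (hlb : ∀ s, c₁ * |s| ^ p - c₂ ≤ W s)
    (hub : ∀ s, W s ≤ c₃ * (|s| ^ p + 1)) :
    sInf {e : ℝ | ∃ u u' : ℝ → ℝ, AdmissibleW1p0 p u u' ∧ e = energyE W u u'} = 0 ∧
    (0:ℝ) ∉ {e : ℝ | ∃ u u' : ℝ → ℝ, AdmissibleW1p0 p u u' ∧ e = energyE W u u'} :=
  statement0_general W p c₃ z₁ z₂ hW_cont hW_nonneg hz₁ hz₂ hz₁neg hz₂pos h0 hub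
end

section
/- Let W : ℝ → [0,∞) be continuous, let 0 ≤ a < b ≤ 1, let ε > 0, and let v : [a,b] → ℝ be such that v′ is absolutely continuous with v″ ∈ L²(a,b) and W(v′) ∈ L¹(a,b). Then ∫_a^b (ε⁴ v″(x)² + ε^{−2} W(v′(x))) dx ≥ 2ε |H(v′(b)) − H(v′(a))|, where H(s) = ∫₀^s √(W(r)) dr. -/
/-!
`v′` is absolutely continuous with derivative `v″`, and `H` is `C¹` with `H′ = √W`, so `H ∘ v′` is
absolutely continuous with derivative `√W(v′) v″` a.e. The fundamental theorem of calculus for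
absolutely continuous functions gives `H(v′(b)) − H(v′(a)) = ∫_a^b √W(v′) v″`, and Young's
inequality `2ε |√W(v′) v″| ≤ ε⁴ v″² + ε⁻² W(v′)` bounds the integrand pointwise.
-/

open MeasureTheory Set Filter

/-- `H(s) = ∫₀^s √(W(r)) dr`. -/
noncomputable def Hfun (W : ℝ → ℝ) (s : ℝ) : ℝ := ∫ r in (0:ℝ)..s, Real.sqrt (W r)

theorem LipschitzOnWith.comp_absolutelyContinuousOnInterval {X Y : Type*}
    [PseudoMetricSpace X] [PseudoMetricSpace Y] {g : X → Y} {f : ℝ → X} {K : NNReal} {s : Set X}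
    {a b : ℝ} (hg : LipschitzOnWith K g s) (hfs : MapsTo f (uIcc a b) s)
    (hf : AbsolutelyContinuousOnInterval f a b) :
    AbsolutelyContinuousOnInterval (g ∘ f) a b := by
  unfold AbsolutelyContinuousOnInterval at hf ⊢
  refine squeeze_zero' (Eventually.of_forall fun _ ↦ Finset.sum_nonneg fun _ _ ↦ dist_nonneg) ?_
    (by simpa using hf.const_mul (K : ℝ))
  rw [eventually_inf_principal]
  filter_upwards with E hE
  rw [Finset.mul_sum]
  gcongr with i hi
  exact hg.dist_le_mul _ (hfs (hE.1 i hi).1) _ (hfs (hE.1 i hi).2)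

theorem LocallyLipschitz.comp_absolutelyContinuousOnInterval {E Y : Type*}
    [SeminormedAddCommGroup E] [PseudoMetricSpace Y] {g : E → Y} {f : ℝ → E} {a b : ℝ}
    (hg : LocallyLipschitz g) (hf : AbsolutelyContinuousOnInterval f a b) :
    AbsolutelyContinuousOnInterval (g ∘ f) a b := by
  obtain ⟨K, hK⟩ := LocallyLipschitzOn.exists_lipschitzOnWith_of_compact
    (isCompact_uIcc.image_of_continuousOn hf.continuousOn) hg.locallyLipschitzOn
  exact hK.comp_absolutelyContinuousOnInterval (mapsTo_image f _) hf

theorem AbsolutelyContinuousOnInterval.integral_comp_mul_deriv {f g : ℝ → ℝ} {a b : ℝ}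
    (hf : AbsolutelyContinuousOnInterval f a b) (hg : Continuous g) :
    ∫ x in a..b, g (f x) * deriv f x = ∫ y in f a..f b, g y := by
  set G : ℝ → ℝ := fun y ↦ ∫ t in (0 : ℝ)..y, g t
  have hG : ∀ y, HasDerivAt G (g y) y := fun y ↦ (hg.integral_hasStrictDerivAt 0 y).hasDerivAt
  have hG_deriv : deriv G = g := funext fun y ↦ (hG y).deriv
  have hG_C1 : ContDiff ℝ 1 G :=
    contDiff_one_iff_deriv.2 ⟨fun y ↦ (hG y).differentiableAt, hG_deriv ▸ hg⟩
  have hGf := hG_C1.locallyLipschitz.comp_absolutelyContinuousOnInterval hf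
  calc ∫ x in a..b, g (f x) * deriv f x = ∫ x in a..b, deriv (G ∘ f) x := by
        refine intervalIntegral.integral_congr_ae ?_
        filter_upwards [hf.ae_differentiableAt] with x hx hxab
        exact (((hG (f x)).comp x (hx (uIoc_subset_uIcc hxab)).hasDerivAt).deriv).symm
    _ = G (f b) - G (f a) := hGf.integral_deriv_eq_sub
    _ = ∫ y in f a..f b, g y :=
        intervalIntegral.integral_interval_sub_left (hg.intervalIntegrable _ _)
          (hg.intervalIntegrable _ _)

theorem integral_comp_mul_eq_of_eq_primitive {g u u' : ℝ → ℝ} {a b : ℝ} (hab : a ≤ b)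
    (hg : Continuous g) (hu' : IntervalIntegrable u' volume a b)
    (hu : ∀ x ∈ Icc a b, u x = u a + ∫ t in a..x, u' t) :
    ∫ x in a..b, g (u x) * u' x = ∫ y in u a..u b, g y := by
  -- `u` is only known on `[a, b]`; `U` is its extension to `ℝ` as a primitive of `u'`.
  set U : ℝ → ℝ := fun x ↦ u a + ∫ t in a..x, u' t
  have hU_ac : AbsolutelyContinuousOnInterval U a b :=
    (LipschitzWith.const (u a)).lipschitzOnWith.absolutelyContinuousOnInterval.add
      (hu'.absolutelyContinuousOnInterval_intervalIntegral left_mem_uIcc)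
  have hUa : U a = u a := by simp [U]
  have hUb : U b = u b := (hu b (right_mem_Icc.2 hab)).symm
  rw [← hUa, ← hUb, ← hU_ac.integral_comp_mul_deriv hg]
  refine intervalIntegral.integral_congr_ae ?_
  filter_upwards [hu'.ae_hasDerivAt_integral] with x hx hxab
  have hx_mem : x ∈ uIcc a b := uIoc_subset_uIcc hxab
  rw [((hx hx_mem a left_mem_uIcc).const_add (u a)).deriv,
    hu x (by rwa [uIcc_of_le hab] at hx_mem)]

theorem Hfun_sub_Hfun {W : ℝ → ℝ} (hW : Continuous W) (x y : ℝ) :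
    Hfun W y - Hfun W x = ∫ r in x..y, Real.sqrt (W r) :=
  have hsqrtW : Continuous fun r ↦ Real.sqrt (W r) := by fun_prop
  intervalIntegral.integral_interval_sub_left (hsqrtW.intervalIntegrable _ _)
    (hsqrtW.intervalIntegrable _ _)

theorem two_mul_mul_abs_mul_le {ε : ℝ} (hε : 0 < ε) (r c : ℝ) :
    2 * ε * |r * c| ≤ ε ^ 4 * c ^ 2 + (ε ^ 2)⁻¹ * r ^ 2 := by
  have hsq : ε ^ 4 * c ^ 2 + (ε ^ 2)⁻¹ * r ^ 2 - 2 * ε * |r * c|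
      = (ε ^ 2 * |c| - ε⁻¹ * |r|) ^ 2 := by
    rw [abs_mul, ← sq_abs r, ← sq_abs c]
    field_simp
    ring
  linarith [sq_nonneg (ε ^ 2 * |c| - ε⁻¹ * |r|)]

theorem statement1_general
    (W : ℝ → ℝ) (hW_cont : Continuous W) (hW_nonneg : ∀ s, 0 ≤ W s)
    (a b ε : ℝ) (hab : a < b) (hε : 0 < ε)
    (v' v'' : ℝ → ℝ)
    (hv'ac : ∀ x ∈ Set.Icc a b, v' x = v' a + ∫ t in a..x, v'' t)
    (hv''int : IntervalIntegrable v'' volume a b)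
    (hv''L2 : IntervalIntegrable (fun x => (v'' x) ^ 2) volume a b)
    (hWL1 : IntervalIntegrable (fun x => W (v' x)) volume a b) :
    2 * ε * |Hfun W (v' b) - Hfun W (v' a)|
      ≤ ∫ x in a..b, (ε ^ 4 * (v'' x) ^ 2 + (ε ^ 2)⁻¹ * W (v' x)) := by
  have hv'_cont : ContinuousOn v' (uIcc a b) := by
    rw [uIcc_of_le hab.le]
    refine (continuousOn_const.add ?_).congr hv'ac
    simpa [uIcc_of_le hab.le] using intervalIntegral.continuousOn_primitive_interval
      ((intervalIntegrable_iff' (by finiteness)).1 hv''int)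
  have hsqrtW : Continuous fun r ↦ Real.sqrt (W r) := by fun_prop
  have h_int : IntervalIntegrable (fun x ↦ Real.sqrt (W (v' x)) * v'' x) volume a b :=
    hv''int.continuousOn_mul (hsqrtW.comp_continuousOn hv'_cont)
  calc 2 * ε * |Hfun W (v' b) - Hfun W (v' a)|
      = 2 * ε * |∫ x in a..b, Real.sqrt (W (v' x)) * v'' x| := by
        rw [Hfun_sub_Hfun hW_cont,
          integral_comp_mul_eq_of_eq_primitive hab.le hsqrtW hv''int hv'ac]
    _ ≤ 2 * ε * ∫ x in a..b, |Real.sqrt (W (v' x)) * v'' x| := by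
        gcongr
        exact intervalIntegral.abs_integral_le_integral_abs hab.le
    _ = ∫ x in a..b, 2 * ε * |Real.sqrt (W (v' x)) * v'' x| :=
        (intervalIntegral.integral_const_mul _ _).symm
    _ ≤ ∫ x in a..b, (ε ^ 4 * (v'' x) ^ 2 + (ε ^ 2)⁻¹ * W (v' x)) :=
        intervalIntegral.integral_mono_on hab.le (h_int.abs.const_mul _)
          ((hv''L2.const_mul _).add (hWL1.const_mul _))
          fun x _ ↦ by
            simpa only [Real.sq_sqrt (hW_nonneg _)] using
              two_mul_mul_abs_mul_le hε (Real.sqrt (W (v' x))) (v'' x)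

/-- The Modica–Mortola type lower bound:
`∫_a^b (ε⁴ v″² + ε⁻² W(v′)) dx ≥ 2ε |H(v′(b)) − H(v′(a))|`. -/
theorem statement1
    (W : ℝ → ℝ) (hW_cont : Continuous W) (hW_nonneg : ∀ s, 0 ≤ W s)
    (a b ε : ℝ) (ha : 0 ≤ a) (hab : a < b) (hb : b ≤ 1) (hε : 0 < ε)
    (v v' v'' : ℝ → ℝ)
    (hv'ac : ∀ x ∈ Set.Icc a b, v' x = v' a + ∫ t in a..x, v'' t)
    (hv'int : IntervalIntegrable v' volume a b)
    (hv''int : IntervalIntegrable v'' volume a b)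
    (hv''L2 : IntervalIntegrable (fun x => (v'' x) ^ 2) volume a b)
    (hWL1 : IntervalIntegrable (fun x => W (v' x)) volume a b) :
    2 * ε * |Hfun W (v' b) - Hfun W (v' a)|
      ≤ ∫ x in a..b, (ε ^ 4 * (v'' x) ^ 2 + (ε ^ 2)⁻¹ * W (v' x)) :=
  statement1_general W hW_cont hW_nonneg a b ε hab hε v' v'' hv'ac hv''int hv''L2 hWL1
end

section
/- Assume (H1)–(H5). Let C > 0, 0 < η < η₀, ε > 0, and let v ∈ V satisfy I^ε(v) ≤ C. Call an open interval (x⁻,x⁺) ⊂ (0,1) an A₊^η-transition layer for v if z₁+η < v′(x) < z₂−η for all x ∈ (x⁻,x⁺), v′(x⁻) = z₁+η and v′(x⁺) = z₂−η (and analogously for A₋^η with the boundary values swapped, and B₊^η, B₋^η with z₁,z₂ replaced by z₂,z₃). Then there is a constant c > 0, depending only on C and on the data of W, such that every finite family of pairwise disjoint A₊^η-transition layers (respectively A₋^η-, B₊^η-, or B₋^η-transition layers) for v in (0,1) has cardinality at most c ε^{−1}. -/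
open MeasureTheory Set Filter

/-- `u ∈ V = H²(0,1) ∩ W^{1,p}₀(0,1)`, represented through its first and second
derivatives `u'`, `u''`. -/
def MemV (p : ℝ) (u u' u'' : ℝ → ℝ) : Prop :=
  u 0 = 0 ∧ u 1 = 0 ∧
  (∀ x ∈ Set.Icc (0:ℝ) 1, u x = ∫ t in (0:ℝ)..x, u' t) ∧
  (∀ x ∈ Set.Icc (0:ℝ) 1, u' x = u' 0 + ∫ t in (0:ℝ)..x, u'' t) ∧
  IntervalIntegrable u' volume 0 1 ∧
  IntervalIntegrable u'' volume 0 1 ∧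
  IntervalIntegrable (fun x => |u' x| ^ p) volume 0 1 ∧
  IntervalIntegrable (fun x => (u'' x) ^ 2) volume 0 1

/-- The rescaled energy `I^ε(u) = ∫₀¹ (ε⁴ u''² + ε⁻² W(u') + ε⁻² u²) dx`. -/
noncomputable def Ieps (W : ℝ → ℝ) (ε : ℝ) (u u' u'' : ℝ → ℝ) : ℝ :=
  ∫ x in (0:ℝ)..1,
    (ε ^ 4 * (u'' x) ^ 2 + (ε ^ 2)⁻¹ * W (u' x) + (ε ^ 2)⁻¹ * (u x) ^ 2)

/-- Hypotheses (H1)–(H5) on the three–well potential `W`. -/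
structure HypW (W : ℝ → ℝ) (p q c₀ c₁ c₂ c₃ η₀ z₁ z₂ z₃ : ℝ) : Prop where
  cont : Continuous W
  nonneg : ∀ s, 0 ≤ W s
  hp : 1 < p
  hc₁ : 0 < c₁
  hc₂ : 0 < c₂
  hc₃ : 0 < c₃
  lb : ∀ s, c₁ * |s| ^ p - c₂ ≤ W s
  ub : ∀ s, W s ≤ c₃ * (|s| ^ p + 1)
  hz₁ : z₁ < 0
  hz₂ : 0 < z₂
  hz₂₃ : z₂ < z₃
  zeroSet : ∀ s, W s = 0 ↔ (s = z₁ ∨ s = z₂ ∨ s = z₃)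
  hη₀pos : 0 < η₀
  hη₀lt : η₀ < min 1 (min (-z₁) (min z₂ ((z₃ - z₂) / 2)))
  hc₀ : 0 < c₀
  hq : 0 < q
  coer : ∀ s,
    c₀ * min (min (|s - z₁| ^ q) (min (|s - z₂| ^ q) (|s - z₃| ^ q))) (η₀ ^ q) ≤ W s

/-- A rising transition layer for `v'` between the wells `w₁ < w₂`:
on `(I.1, I.2) ⊂ (0,1)` one has `w₁ + η < v' < w₂ − η`, with `v'(I.1) = w₁ + η` and
`v'(I.2) = w₂ − η`.  With `(w₁,w₂) = (z₁,z₂)` this is an `A₊^η`-layer, with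
`(w₁,w₂) = (z₂,z₃)` a `B₊^η`-layer. -/
def IsPlusLayer (v' : ℝ → ℝ) (η w₁ w₂ : ℝ) (I : ℝ × ℝ) : Prop :=
  0 ≤ I.1 ∧ I.1 < I.2 ∧ I.2 ≤ 1 ∧
  (∀ x ∈ Set.Ioo I.1 I.2, w₁ + η < v' x ∧ v' x < w₂ - η) ∧
  v' I.1 = w₁ + η ∧ v' I.2 = w₂ - η

/-- A decreasing transition layer (`A₋^η` resp. `B₋^η`): the boundary values are swapped. -/
def IsMinusLayer (v' : ℝ → ℝ) (η w₁ w₂ : ℝ) (I : ℝ × ℝ) : Prop :=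
  0 ≤ I.1 ∧ I.1 < I.2 ∧ I.2 ≤ 1 ∧
  (∀ x ∈ Set.Ioo I.1 I.2, w₁ + η < v' x ∧ v' x < w₂ - η) ∧
  v' I.1 = w₂ - η ∧ v' I.2 = w₁ + η

/-- A finite family of pairwise disjoint intervals. -/
def PairwiseDisjointFamily (s : Finset (ℝ × ℝ)) : Prop :=
  ∀ I ∈ s, ∀ J ∈ s, I ≠ J → Disjoint (Set.Ioo I.1 I.2) (Set.Ioo J.1 J.2)

/-!
On a layer, `v'` runs across the whole band `[zᵢ + η₀, zᵢ₊₁ − η₀]`, on which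
`W ≥ m := c₀ η₀^q`. Wherever `v'` lies in the band, the Modica–Mortola inequality
`ε⁴ v''² + ε⁻² W(v') ≥ 2 ε √m |v''|` holds, so each layer carries energy at least
`2 ε √m L`, where `L` is the width of the narrower band. Disjoint layers add up to at most
`I^ε(v) ≤ C` energy, hence there are at most `C / (2 √m L) · ε⁻¹` of them.
-/

theorem exists_mapsTo_Ioo_of_le_of_le {f : ℝ → ℝ} {x₀ x₁ α β : ℝ} (hx : x₀ ≤ x₁)
    (hf : ContinuousOn f (Icc x₀ x₁)) (h₀ : f x₀ ≤ α) (h₁ : β ≤ f x₁) :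
    ∃ a b, x₀ ≤ a ∧ a ≤ b ∧ b ≤ x₁ ∧ β - α ≤ f b - f a ∧ MapsTo f (Ioo a b) (Ioo α β) := by
  -- `b` is the first time `f` reaches `β`, and `a` the last time before `b` that `f ≤ α`.
  have hT : IsCompact (Icc x₀ x₁ ∩ f ⁻¹' Ici β) :=
    isCompact_Icc.of_isClosed_subset (hf.preimage_isClosed_of_isClosed isClosed_Icc isClosed_Ici)
      inter_subset_left
  obtain ⟨b, ⟨hb, hβb⟩, hb_least⟩ := hT.exists_isLeast ⟨x₁, right_mem_Icc.2 hx, h₁⟩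
  have hS : IsCompact (Icc x₀ b ∩ f ⁻¹' Iic α) :=
    isCompact_Icc.of_isClosed_subset
      ((hf.mono (Icc_subset_Icc_right hb.2)).preimage_isClosed_of_isClosed isClosed_Icc
        isClosed_Iic) inter_subset_left
  obtain ⟨a, ⟨ha, hαa⟩, ha_greatest⟩ := hS.exists_isGreatest ⟨x₀, left_mem_Icc.2 hb.1, h₀⟩
  refine ⟨a, b, ha.1, ha.2, hb.2, by linarith [show β ≤ f b from hβb, show f a ≤ α from hαa], ?_⟩
  intro x hx
  constructor
  · by_contra! hxα
    exact hx.1.not_ge (ha_greatest ⟨⟨ha.1.trans hx.1.le, hx.2.le⟩, hxα⟩)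
  · by_contra! hβx
    exact hx.2.not_ge (hb_least ⟨⟨ha.1.trans hx.1.le, hx.2.le.trans hb.2⟩, hβx⟩)

def CrossesBand (f : ℝ → ℝ) (α β : ℝ) (I : ℝ × ℝ) : Prop :=
  0 ≤ I.1 ∧ I.1 ≤ I.2 ∧ I.2 ≤ 1 ∧ (f I.1 ≤ α ∧ β ≤ f I.2 ∨ β ≤ f I.1 ∧ f I.2 ≤ α)

theorem IsPlusLayer.crossesBand {v' : ℝ → ℝ} {η η' w₁ w₂ : ℝ} {I : ℝ × ℝ}
    (h : IsPlusLayer v' η w₁ w₂ I) (hη : η ≤ η') : CrossesBand v' (w₁ + η') (w₂ - η') I := by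
  obtain ⟨h0, h12, h1, -, hv₁, hv₂⟩ := h
  exact ⟨h0, h12.le, h1, Or.inl ⟨by linarith, by linarith⟩⟩

theorem IsMinusLayer.crossesBand {v' : ℝ → ℝ} {η η' w₁ w₂ : ℝ} {I : ℝ × ℝ}
    (h : IsMinusLayer v' η w₁ w₂ I) (hη : η ≤ η') : CrossesBand v' (w₁ + η') (w₂ - η') I := by
  obtain ⟨h0, h12, h1, -, hv₁, hv₂⟩ := h
  exact ⟨h0, h12.le, h1, Or.inr ⟨by linarith, by linarith⟩⟩

theorem CrossesBand.exists_mapsTo {f : ℝ → ℝ} {α β : ℝ} {I : ℝ × ℝ} (h : CrossesBand f α β I)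
    (hf : ContinuousOn f (Icc I.1 I.2)) :
    ∃ a b, I.1 ≤ a ∧ a ≤ b ∧ b ≤ I.2 ∧ β - α ≤ |f b - f a| ∧ MapsTo f (Ioo a b) (Icc α β) := by
  obtain ⟨-, hI, -, ⟨h₀, h₁⟩ | ⟨h₀, h₁⟩⟩ := h
  · obtain ⟨a, b, ha, hab, hb, hdiff, hmaps⟩ := exists_mapsTo_Ioo_of_le_of_le hI hf h₀ h₁
    exact ⟨a, b, ha, hab, hb, le_abs.2 (.inl hdiff), fun x hx => Ioo_subset_Icc_self (hmaps hx)⟩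
  · obtain ⟨a, b, ha, hab, hb, hdiff, hmaps⟩ :=
      exists_mapsTo_Ioo_of_le_of_le (f := fun x => -f x) hI hf.neg (neg_le_neg h₀) (neg_le_neg h₁)
    refine ⟨a, b, ha, hab, hb, le_abs.2 (.inr (by linarith)), fun x hx => ?_⟩
    obtain ⟨hx₁, hx₂⟩ := hmaps hx
    exact ⟨by linarith, by linarith⟩

theorem continuousOn_Icc_of_eq_add_primitive {f g : ℝ → ℝ} {a b c : ℝ}
    (hg : IntervalIntegrable g volume a b) (ha : a ≤ b)
    (hf : ∀ x ∈ Icc a b, f x = c + ∫ t in a..x, g t) : ContinuousOn f (Icc a b) := by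
  have hprim := intervalIntegral.continuousOn_primitive_interval' hg left_mem_uIcc
  rw [uIcc_of_le ha] at hprim
  exact (continuousOn_const.add hprim).congr hf

namespace MemV

variable {p : ℝ} {v v' v'' : ℝ → ℝ}

theorem continuousOn (hV : MemV p v v' v'') : ContinuousOn v (Icc 0 1) := by
  obtain ⟨-, -, hv, -, hv', -⟩ := hV
  exact continuousOn_Icc_of_eq_add_primitive (c := 0) hv' zero_le_one
    fun x hx => (hv x hx).trans (zero_add _).symm

theorem continuousOn_deriv (hV : MemV p v v' v'') : ContinuousOn v' (Icc 0 1) := by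
  obtain ⟨-, -, -, hv', -, hv'', -⟩ := hV
  exact continuousOn_Icc_of_eq_add_primitive hv'' zero_le_one hv'

theorem deriv_sub_deriv (hV : MemV p v v' v'') {a b : ℝ} (ha : 0 ≤ a) (hab : a ≤ b)
    (hb : b ≤ 1) : v' b - v' a = ∫ x in Ioo a b, v'' x := by
  obtain ⟨-, -, -, hv', -, hv'', -⟩ := hV
  have hsub : ∀ {x}, 0 ≤ x → x ≤ 1 → IntervalIntegrable v'' volume 0 x := fun h0 h1 =>
    hv''.mono_set (by rw [uIcc_of_le h0, uIcc_of_le zero_le_one]; exact Icc_subset_Icc_right h1)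
  rw [hv' b ⟨ha.trans hab, hb⟩, hv' a ⟨ha, hab.trans hb⟩, add_sub_add_left_eq_sub,
    intervalIntegral.integral_interval_sub_left (hsub (ha.trans hab) hb) (hsub ha (hab.trans hb)),
    intervalIntegral.integral_of_le hab, integral_Ioc_eq_integral_Ioo]

end MemV

noncomputable def energyDensity (W : ℝ → ℝ) (ε : ℝ) (u u' u'' : ℝ → ℝ) (x : ℝ) : ℝ :=
  ε ^ 4 * (u'' x) ^ 2 + (ε ^ 2)⁻¹ * W (u' x) + (ε ^ 2)⁻¹ * (u x) ^ 2

section Energy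

variable {W : ℝ → ℝ} {p ε m α β : ℝ} {v v' v'' : ℝ → ℝ}

theorem energyDensity_nonneg (hW : ∀ s, 0 ≤ W s) (x : ℝ) :
    0 ≤ energyDensity W ε v v' v'' x := by
  have := hW (v' x)
  unfold energyDensity
  positivity

theorem MemV.intervalIntegrable_energyDensity (hV : MemV p v v' v'') (hW : Continuous W) :
    IntervalIntegrable (energyDensity W ε v v' v'') volume 0 1 := by
  have hcont : ∀ {f : ℝ → ℝ}, ContinuousOn f (Icc 0 1) →
      IntervalIntegrable (fun x => (ε ^ 2)⁻¹ * f x) volume 0 1 := fun hf =>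
    (continuousOn_const.mul (hf.mono (by rw [uIcc_of_le zero_le_one]))).intervalIntegrable
  obtain ⟨-, -, -, -, -, -, -, hv''sq⟩ := id hV
  exact ((hv''sq.const_mul _).add (hcont (hW.comp_continuousOn hV.continuousOn_deriv))).add
    (hcont (hV.continuousOn.pow 2))

theorem two_mul_mul_sqrt_mul_abs_le (hε : 0 < ε) {w : ℝ} (hw : 0 ≤ w) (y : ℝ) :
    2 * ε * √w * |y| ≤ ε ^ 4 * y ^ 2 + (ε ^ 2)⁻¹ * w :=
  calc 2 * ε * √w * |y| = 2 * (ε ^ 2 * |y|) * (√w / ε) := by field_simp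
    _ ≤ (ε ^ 2 * |y|) ^ 2 + (√w / ε) ^ 2 := two_mul_le_add_sq _ _
    _ = ε ^ 4 * y ^ 2 + (ε ^ 2)⁻¹ * w := by rw [div_pow, Real.sq_sqrt hw, mul_pow, sq_abs]; ring

theorem setIntegral_energyDensity_ge_of_crossesBand (hV : MemV p v v' v'')
    (hWc : Continuous W) (hW : ∀ s, 0 ≤ W s) (hε : 0 < ε) (hWm : ∀ t ∈ Icc α β, m ≤ W t)
    {I : ℝ × ℝ} (hI : CrossesBand v' α β I) :
    2 * ε * √m * (β - α) ≤ ∫ x in Ioo I.1 I.2, energyDensity W ε v v' v'' x := by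
  obtain ⟨hI₀, -, hI₁, -⟩ := id hI
  obtain ⟨-, -, -, -, -, hv''₀₁, -⟩ := id hV
  obtain ⟨a, b, ha, hab, hb, hdiff, hmaps⟩ :=
    hI.exists_mapsTo (hV.continuousOn_deriv.mono (Icc_subset_Icc hI₀ hI₁))
  have hg : IntegrableOn (energyDensity W ε v v' v'') (Ioo I.1 I.2) := by
    refine ((hV.intervalIntegrable_energyDensity hWc).def'.mono_set ?_)
    rw [uIoc_of_le zero_le_one]
    exact Ioo_subset_Ioc_self.trans (Ioc_subset_Ioc hI₀ hI₁)
  have hv'' : IntegrableOn v'' (Ioo a b) := by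
    refine hv''₀₁.def'.mono_set ?_
    rw [uIoc_of_le zero_le_one]
    exact Ioo_subset_Ioc_self.trans (Ioc_subset_Ioc (hI₀.trans ha) (hb.trans hI₁))
  have hpointwise : ∀ x ∈ Ioo a b, 2 * ε * √m * |v'' x| ≤ energyDensity W ε v v' v'' x := by
    intro x hx
    have hsqrt : √m ≤ √(W (v' x)) := Real.sqrt_le_sqrt (hWm _ (hmaps hx))
    have := two_mul_mul_sqrt_mul_abs_le hε (hW (v' x)) (v'' x)
    have : 2 * ε * √m * |v'' x| ≤ 2 * ε * √(W (v' x)) * |v'' x| := by gcongr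
    unfold energyDensity
    nlinarith [sq_nonneg (v x), inv_pos.2 (pow_pos hε 2)]
  calc 2 * ε * √m * (β - α) ≤ 2 * ε * √m * |∫ x in Ioo a b, v'' x| := by
        rw [← hV.deriv_sub_deriv (hI₀.trans ha) hab (hb.trans hI₁)]; gcongr
    _ ≤ 2 * ε * √m * ∫ x in Ioo a b, |v'' x| := by gcongr; exact abs_integral_le_integral_abs
    _ = ∫ x in Ioo a b, 2 * ε * √m * |v'' x| := (integral_const_mul _ _).symm
    _ ≤ ∫ x in Ioo a b, energyDensity W ε v v' v'' x :=
        setIntegral_mono_on (hv''.abs.const_mul _) (hg.mono_set (Ioo_subset_Ioo ha hb))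
          measurableSet_Ioo hpointwise
    _ ≤ ∫ x in Ioo I.1 I.2, energyDensity W ε v v' v'' x :=
        setIntegral_mono_set hg (.of_forall (energyDensity_nonneg hW))
          (Ioo_subset_Ioo ha hb).eventuallyLE

end Energy

theorem sum_setIntegral_Ioo_le_intervalIntegral {g : ℝ → ℝ} {a b : ℝ} (hab : a ≤ b)
    (hg : IntervalIntegrable g volume a b) (hg₀ : ∀ x, 0 ≤ g x) {s : Finset (ℝ × ℝ)}
    (hs : PairwiseDisjointFamily s) (hsub : ∀ I ∈ s, a ≤ I.1 ∧ I.2 ≤ b) :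
    ∑ I ∈ s, ∫ x in Ioo I.1 I.2, g x ≤ ∫ x in a..b, g x := by
  have hg' : IntegrableOn g (Ioc a b) := by simpa [uIoc_of_le hab] using hg.def'
  have hU : (⋃ I ∈ s, Ioo I.1 I.2) ⊆ Ioc a b := iUnion₂_subset fun I hI x hx =>
    ⟨(hsub I hI).1.trans_lt hx.1, hx.2.le.trans (hsub I hI).2⟩
  rw [← integral_biUnion_finset s (fun _ _ => measurableSet_Ioo) hs fun I hI =>
      hg'.mono_set ((subset_biUnion_of_mem (u := fun I : ℝ × ℝ => Ioo I.1 I.2) hI).trans hU),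
    intervalIntegral.integral_of_le hab]
  exact setIntegral_mono_set hg' (.of_forall hg₀) hU.eventuallyLE

theorem card_le_of_crossesBand {W : ℝ → ℝ} {p ε m α β L C : ℝ} {v v' v'' : ℝ → ℝ}
    (hV : MemV p v v' v'') (hWc : Continuous W) (hW : ∀ s, 0 ≤ W s) (hε : 0 < ε)
    (hm : 0 < m) (hWm : ∀ t ∈ Icc α β, m ≤ W t) (hL : 0 < L) (hLαβ : L ≤ β - α)
    (hIeps : Ieps W ε v v' v'' ≤ C) {s : Finset (ℝ × ℝ)} (hs : PairwiseDisjointFamily s)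
    (hcross : ∀ I ∈ s, CrossesBand v' α β I) :
    (s.card : ℝ) ≤ C / (2 * √m * L) * ε⁻¹ := by
  have hδ : 0 < 2 * ε * √m * L := by have := Real.sqrt_pos.2 hm; positivity
  have hsum : (s.card : ℝ) * (2 * ε * √m * L) ≤ C :=
    calc (s.card : ℝ) * (2 * ε * √m * L) = ∑ _I ∈ s, 2 * ε * √m * L := by
          rw [Finset.sum_const, nsmul_eq_mul]
      _ ≤ ∑ I ∈ s, ∫ x in Ioo I.1 I.2, energyDensity W ε v v' v'' x :=
          Finset.sum_le_sum fun I hI =>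
            (by gcongr : 2 * ε * √m * L ≤ 2 * ε * √m * (β - α)).trans
              (setIntegral_energyDensity_ge_of_crossesBand hV hWc hW hε hWm (hcross I hI))
      _ ≤ Ieps W ε v v' v'' :=
          sum_setIntegral_Ioo_le_intervalIntegral zero_le_one
            (hV.intervalIntegrable_energyDensity hWc) (energyDensity_nonneg hW) hs
            fun I hI => ⟨(hcross I hI).1, (hcross I hI).2.2.1⟩
      _ ≤ C := hIeps
  rw [← le_div_iff₀ hδ] at hsum
  exact hsum.trans_eq (by field_simp)

namespace HypW

variable {W : ℝ → ℝ} {p q c₀ c₁ c₂ c₃ η₀ z₁ z₂ z₃ : ℝ}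

theorem le_apply_of_le_abs_sub (hW : HypW W p q c₀ c₁ c₂ c₃ η₀ z₁ z₂ z₃) {t : ℝ}
    (h₁ : η₀ ≤ |t - z₁|) (h₂ : η₀ ≤ |t - z₂|) (h₃ : η₀ ≤ |t - z₃|) : c₀ * η₀ ^ q ≤ W t := by
  have hpow : ∀ {r : ℝ}, η₀ ≤ r → η₀ ^ q ≤ r ^ q := fun h =>
    Real.rpow_le_rpow hW.hη₀pos.le h hW.hq.le
  refine le_trans ?_ (hW.coer t)
  gcongr
  · exact hW.hc₀.le
  · exact le_min (le_min (hpow h₁) (le_min (hpow h₂) (hpow h₃))) le_rfl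

theorem le_apply_of_mem_Icc₁₂ (hW : HypW W p q c₀ c₁ c₂ c₃ η₀ z₁ z₂ z₃) {t : ℝ}
    (ht : t ∈ Icc (z₁ + η₀) (z₂ - η₀)) : c₀ * η₀ ^ q ≤ W t := by
  have := hW.hz₂₃
  exact hW.le_apply_of_le_abs_sub ((by linarith [ht.1] : η₀ ≤ t - z₁).trans (le_abs_self _))
    ((by linarith [ht.2] : η₀ ≤ -(t - z₂)).trans (neg_le_abs _))
    ((by linarith [ht.2] : η₀ ≤ -(t - z₃)).trans (neg_le_abs _))

theorem le_apply_of_mem_Icc₂₃ (hW : HypW W p q c₀ c₁ c₂ c₃ η₀ z₁ z₂ z₃) {t : ℝ}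
    (ht : t ∈ Icc (z₂ + η₀) (z₃ - η₀)) : c₀ * η₀ ^ q ≤ W t := by
  have := hW.hz₁
  have := hW.hz₂
  exact hW.le_apply_of_le_abs_sub ((by linarith [ht.1] : η₀ ≤ t - z₁).trans (le_abs_self _))
    ((by linarith [ht.1] : η₀ ≤ t - z₂).trans (le_abs_self _))
    ((by linarith [ht.2] : η₀ ≤ -(t - z₃)).trans (neg_le_abs _))

end HypW

theorem statement2
    (W : ℝ → ℝ) (p q c₀ c₁ c₂ c₃ η₀ z₁ z₂ z₃ : ℝ)
    (hW : HypW W p q c₀ c₁ c₂ c₃ η₀ z₁ z₂ z₃)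
    (C : ℝ) (hC : 0 < C) :
    ∃ c : ℝ, 0 < c ∧
      ∀ η ε : ℝ, ∀ v v' v'' : ℝ → ℝ,
        0 < η → η < η₀ → 0 < ε →
        MemV p v v' v'' → Ieps W ε v v' v'' ≤ C →
        (∀ s : Finset (ℝ × ℝ), PairwiseDisjointFamily s →
            (∀ I ∈ s, IsPlusLayer v' η z₁ z₂ I) → (s.card : ℝ) ≤ c * ε⁻¹) ∧
        (∀ s : Finset (ℝ × ℝ), PairwiseDisjointFamily s →
            (∀ I ∈ s, IsMinusLayer v' η z₁ z₂ I) → (s.card : ℝ) ≤ c * ε⁻¹) ∧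
        (∀ s : Finset (ℝ × ℝ), PairwiseDisjointFamily s →
            (∀ I ∈ s, IsPlusLayer v' η z₂ z₃ I) → (s.card : ℝ) ≤ c * ε⁻¹) ∧
        (∀ s : Finset (ℝ × ℝ), PairwiseDisjointFamily s →
            (∀ I ∈ s, IsMinusLayer v' η z₂ z₃ I) → (s.card : ℝ) ≤ c * ε⁻¹) := by
  obtain ⟨-, hη₀z₁, hη₀z₂, hη₀z₃⟩ : η₀ < 1 ∧ η₀ < -z₁ ∧ η₀ < z₂ ∧ η₀ < (z₃ - z₂) / 2 := by
    simpa only [lt_min_iff] using hW.hη₀lt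
  set m := c₀ * η₀ ^ q
  have hm : 0 < m := mul_pos hW.hc₀ (Real.rpow_pos_of_pos hW.hη₀pos q)
  set L := min (z₂ - z₁ - 2 * η₀) (z₃ - z₂ - 2 * η₀)
  have hL : 0 < L := lt_min (by linarith) (by linarith)
  refine ⟨C / (2 * √m * L), div_pos hC (by have := Real.sqrt_pos.2 hm; positivity),
    fun η ε v v' v'' _ hηη₀ hε hV hIeps => ?_⟩
  have h₁₂ {s : Finset (ℝ × ℝ)} :=
    card_le_of_crossesBand (α := z₁ + η₀) (β := z₂ - η₀) (s := s) hV hW.cont hW.nonneg hε hm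
      (fun _ => hW.le_apply_of_mem_Icc₁₂) hL ((min_le_left _ _).trans_eq (by ring)) hIeps
  have h₂₃ {s : Finset (ℝ × ℝ)} :=
    card_le_of_crossesBand (α := z₂ + η₀) (β := z₃ - η₀) (s := s) hV hW.cont hW.nonneg hε hm
      (fun _ => hW.le_apply_of_mem_Icc₂₃) hL ((min_le_right _ _).trans_eq (by ring)) hIeps
  exact ⟨fun _ hs hl => h₁₂ hs fun I hI => (hl I hI).crossesBand hηη₀.le,
    fun _ hs hl => h₁₂ hs fun I hI => (hl I hI).crossesBand hηη₀.le,
    fun _ hs hl => h₂₃ hs fun I hI => (hl I hI).crossesBand hηη₀.le,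
    fun _ hs hl => h₂₃ hs fun I hI => (hl I hI).crossesBand hηη₀.le⟩
end

section
/- Let 0 ≤ a ≤ b ≤ 1 and let u, v ∈ W^{1,1}(a,b) be non-decreasing functions with u(a) = v(a), such that for every ρ ≥ 0 the Lebesgue measures agree: Leb({x ∈ (a,b) : u′(x) ≥ ρ}) = Leb({x ∈ (a,b) : v′(x) ≥ ρ}). If moreover u′ is non-decreasing on (a,b), then u(x) ≤ v(x) for every x ∈ [a,b]. -/
/-!
By the layer-cake formula, equimeasurability gives `∫ (u' - ρ)⁺ = ∫ (v' - ρ)⁺` on `(a, b)` for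
every `ρ ≥ 0`. Monotonicity of `u` and of `u'` forces `u' ≥ 0`, equimeasurability at level `0`
then forces `v' ≥ 0` a.e., so the case `ρ = 0` says that the total integrals agree.
For `a < x < b`, monotonicity of `u'` makes `(x, b)` a super-level set of `u'` at height
`ρ = u' x`, and the bathtub principle
`∫_(x,b) (v' - ρ) ≤ ∫ (v' - ρ)⁺ = ∫ (u' - ρ)⁺ = ∫_(x,b) (u' - ρ)` gives `∫_x^b v' ≤ ∫_x^b u'`.
Subtracting from the equal totals yields `∫_a^x u' ≤ ∫_a^x v'`.
-/

open MeasureTheory Set Filter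

section LevelSets

variable {α : Type*} [MeasurableSpace α] {μ : Measure α} {f g : α → ℝ} {c : ℝ}

theorem measure_setOf_lt_eq_of_measure_setOf_le_eq
    (h : ∀ ρ, c ≤ ρ → μ {x | ρ ≤ f x} = μ {x | ρ ≤ g x}) {s : ℝ} (hs : c ≤ s) :
    μ {x | s < f x} = μ {x | s < g x} := by
  have hunion : ∀ w : α → ℝ, {x | s < w x} = ⋃ n : ℕ, {x | s + 1 / (n + 1) ≤ w x} := by
    intro w
    ext x
    simp only [mem_iUnion]
    constructor
    · intro (hlt : s < w x)
      obtain ⟨n, hn⟩ := exists_nat_one_div_lt (sub_pos.2 hlt)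
      exact ⟨n, show s + 1 / ((n : ℝ) + 1) ≤ w x by linarith⟩
    · rintro ⟨n, hle⟩
      exact (lt_add_of_pos_right s Nat.one_div_pos_of_nat).trans_le hle
  have hmono : ∀ w : α → ℝ, Monotone fun n : ℕ => {x | s + 1 / ((n : ℝ) + 1) ≤ w x} :=
    fun w n m hnm x (hx : s + 1 / ((n : ℝ) + 1) ≤ w x) =>
      (show s + 1 / ((m : ℝ) + 1) ≤ s + 1 / ((n : ℝ) + 1) by gcongr).trans hx
  rw [hunion f, hunion g, (hmono f).measure_iUnion, (hmono g).measure_iUnion]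
  exact iSup_congr fun n => h _ (by linarith [Nat.one_div_pos_of_nat (α := ℝ) (n := n)])

theorem integral_max_sub_eq_of_measure_setOf_le_eq [IsFiniteMeasure μ]
    (hf : Integrable f μ) (hg : Integrable g μ)
    (h : ∀ ρ, c ≤ ρ → μ {x | ρ ≤ f x} = μ {x | ρ ≤ g x}) {ρ : ℝ} (hρ : c ≤ ρ) :
    ∫ x, max (f x - ρ) 0 ∂μ = ∫ x, max (g x - ρ) 0 ∂μ := by
  have hlayer : ∀ w : α → ℝ, Integrable w μ →
      ∫ x, max (w x - ρ) 0 ∂μ = ∫ t in Ioi 0, μ.real {x | ρ + t < w x} := by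
    intro w hw
    have hw' : Integrable (fun x => max (w x - ρ) 0) μ := (hw.sub (integrable_const ρ)).pos_part
    rw [hw'.integral_eq_integral_meas_lt (Eventually.of_forall fun x => le_max_right _ _)]
    refine setIntegral_congr_fun measurableSet_Ioi fun t (ht : 0 < t) => ?_
    congr 2 with x
    simp only [lt_max_iff]
    constructor
    · rintro (hx | hx) <;> linarith
    · intro hx
      left
      linarith
  rw [hlayer f hf, hlayer g hg]
  refine setIntegral_congr_fun measurableSet_Ioi fun t (ht : 0 < t) => ?_
  rw [measureReal_def, measureReal_def,
    measure_setOf_lt_eq_of_measure_setOf_le_eq h (by linarith : c ≤ ρ + t)]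

theorem ae_le_of_measure_setOf_le_eq [IsFiniteMeasure μ] (hg : AEMeasurable g μ)
    (hf : ∀ᵐ x ∂μ, c ≤ f x) (h : μ {x | c ≤ f x} = μ {x | c ≤ g x}) :
    ∀ᵐ x ∂μ, c ≤ g x := by
  rw [ae_iff_measure_eq (nullMeasurableSet_le aemeasurable_const hg), ← h]
  exact measure_congr (eventuallyEq_univ.2 hf)

theorem integral_eq_of_measure_setOf_le_eq [IsFiniteMeasure μ]
    (hf : Integrable f μ) (hg : Integrable g μ) (hf₀ : 0 ≤ᵐ[μ] f)
    (h : ∀ ρ, 0 ≤ ρ → μ {x | ρ ≤ f x} = μ {x | ρ ≤ g x}) :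
    ∫ x, f x ∂μ = ∫ x, g x ∂μ := by
  have hg₀ : 0 ≤ᵐ[μ] g := ae_le_of_measure_setOf_le_eq hg.aemeasurable hf₀ (h 0 le_rfl)
  have hpos : ∀ w : α → ℝ, 0 ≤ᵐ[μ] w → ∫ x, w x ∂μ = ∫ x, max (w x - 0) 0 ∂μ :=
    fun w hw => integral_congr_ae (hw.mono fun x (hx : 0 ≤ w x) => by
      simp only [sub_zero, max_eq_left hx])
  rw [hpos f hf₀, hpos g hg₀, integral_max_sub_eq_of_measure_setOf_le_eq hf hg h le_rfl]

theorem setIntegral_le_of_integral_max_sub_eq [IsFiniteMeasure μ]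
    (hf : Integrable f μ) (hg : Integrable g μ) {ρ : ℝ}
    (h : ∫ x, max (f x - ρ) 0 ∂μ = ∫ x, max (g x - ρ) 0 ∂μ) {t : Set α} (ht : MeasurableSet t)
    (hf_ge : ∀ᵐ x ∂μ, x ∈ t → ρ ≤ f x) (hf_le : ∀ᵐ x ∂μ, x ∉ t → f x ≤ ρ) :
    ∫ x in t, g x ∂μ ≤ ∫ x in t, f x ∂μ := by
  have hsplit : ∀ w : α → ℝ, Integrable w μ →
      ∫ x in t, w x ∂μ = ∫ x in t, (w x - ρ) ∂μ + μ.real t * ρ := by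
    intro w hw
    rw [integral_sub hw.integrableOn (integrable_const ρ).integrableOn, setIntegral_const,
      smul_eq_mul]
    ring
  have hf_max : ∫ x, max (f x - ρ) 0 ∂μ = ∫ x in t, (f x - ρ) ∂μ := by
    rw [← setIntegral_eq_integral_of_ae_compl_eq_zero
      (hf_le.mono fun x hx hxt => max_eq_right (sub_nonpos.2 (hx hxt)))]
    exact setIntegral_congr_ae ht (hf_ge.mono fun x hx hxt => max_eq_left (sub_nonneg.2 (hx hxt)))
  have hg_max : ∫ x in t, (g x - ρ) ∂μ ≤ ∫ x, max (g x - ρ) 0 ∂μ :=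
    calc ∫ x in t, (g x - ρ) ∂μ ≤ ∫ x in t, max (g x - ρ) 0 ∂μ :=
          setIntegral_mono (hg.sub (integrable_const ρ)).integrableOn
            (hg.sub (integrable_const ρ)).pos_part.integrableOn fun x => le_max_left _ _
      _ ≤ ∫ x, max (g x - ρ) 0 ∂μ :=
          setIntegral_le_integral (hg.sub (integrable_const ρ)).pos_part
            (Eventually.of_forall fun x => le_max_right _ _)
  rw [hsplit g hg, hsplit f hf]
  linarith

end LevelSets

section Interval

variable {a b x : ℝ} {f g : ℝ → ℝ}

theorem nonneg_of_monotoneOn_of_intervalIntegral_nonneg (hf : MonotoneOn f (Ioo a b))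
    (hfi : IntervalIntegrable f volume a b) (h : ∀ t ∈ Ioo a b, 0 ≤ ∫ s in a..t, f s)
    (hx : x ∈ Ioo a b) : 0 ≤ f x := by
  by_contra! hneg
  have hle : ∫ s in a..x, f s ≤ ∫ _ in a..x, f x :=
    intervalIntegral.integral_mono_on_of_le_Ioo hx.1.le
      (hfi.mono_set (uIcc_subset_uIcc_left (Icc_subset_uIcc (Ioo_subset_Icc_self hx))))
      intervalIntegrable_const fun s hs => hf ⟨hs.1, hs.2.trans hx.2⟩ hx hs.2.le
  rw [intervalIntegral.integral_const, smul_eq_mul] at hle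
  nlinarith [h x hx, hx.1]

theorem intervalIntegral_eq_setIntegral_Iic_restrict_Ioo (hax : a ≤ x) (hxb : x ≤ b) :
    ∫ t in a..x, f t = ∫ t in Iic x, f t ∂volume.restrict (Ioo a b) := by
  rw [intervalIntegral.integral_of_le hax, Measure.restrict_restrict measurableSet_Iic,
    ← Iic_inter_Ioc_of_le hxb]
  exact setIntegral_congr_set ((ae_eq_refl _).inter Ioo_ae_eq_Ioc.symm)

theorem intervalIntegral_le_of_monotoneOn_of_measure_setOf_le_eq
    (hf : MonotoneOn f (Ioo a b)) (hf₀ : ∀ t ∈ Ioo a b, 0 ≤ f t)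
    (hfi : IntegrableOn f (Ioo a b)) (hgi : IntegrableOn g (Ioo a b))
    (h : ∀ ρ, 0 ≤ ρ →
      volume.restrict (Ioo a b) {t | ρ ≤ f t} = volume.restrict (Ioo a b) {t | ρ ≤ g t})
    (hx : x ∈ Ioc a b) :
    ∫ t in a..x, f t ≤ ∫ t in a..x, g t := by
  set μ := volume.restrict (Ioo a b)
  have hhead : ∀ w : ℝ → ℝ, Integrable w μ →
      ∫ t in a..x, w t = ∫ t, w t ∂μ - ∫ t in Ioi x, w t ∂μ := fun w hw => by
    rw [intervalIntegral_eq_setIntegral_Iic_restrict_Ioo hx.1.le hx.2,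
      ← integral_add_compl measurableSet_Iic hw, compl_Iic, add_sub_cancel_right]
  have htotal : ∫ t, f t ∂μ = ∫ t, g t ∂μ :=
    integral_eq_of_measure_setOf_le_eq hfi hgi
      ((ae_restrict_iff' measurableSet_Ioo).2 (Eventually.of_forall hf₀)) h
  have htail : ∫ t in Ioi x, g t ∂μ ≤ ∫ t in Ioi x, f t ∂μ := by
    rcases hx.2.eq_or_lt with rfl | hxb
    · have hnull : μ (Ioi x) = 0 := by
        rw [Measure.restrict_apply measurableSet_Ioi, Ioi_inter_Ioo, max_eq_left hx.1.le,
          Ioo_self, measure_empty]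
      rw [setIntegral_measure_zero _ hnull, setIntegral_measure_zero _ hnull]
    · have hxab : x ∈ Ioo a b := ⟨hx.1, hxb⟩
      refine setIntegral_le_of_integral_max_sub_eq hfi hgi
        (integral_max_sub_eq_of_measure_setOf_le_eq hfi hgi h (hf₀ x hxab)) measurableSet_Ioi
        ?_ ?_ <;> refine (ae_restrict_iff' measurableSet_Ioo).2 (Eventually.of_forall ?_)
      · exact fun t ht (htx : x < t) => hf hxab ht htx.le
      · exact fun t ht htx => hf ht hxab (not_lt.1 htx)
  rw [hhead f hfi, hhead g hgi]
  linarith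

end Interval

theorem statement3_general
    (a b : ℝ)
    (u v u' v' : ℝ → ℝ)
    (hu_mono : MonotoneOn u (Set.Icc a b))
    (hu_ac : ∀ x ∈ Set.Icc a b, u x = u a + ∫ t in a..x, u' t)
    (hv_ac : ∀ x ∈ Set.Icc a b, v x = v a + ∫ t in a..x, v' t)
    (hu'int : IntervalIntegrable u' volume a b)
    (hv'int : IntervalIntegrable v' volume a b)
    (huva : u a = v a)
    (hlevel : ∀ ρ : ℝ, 0 ≤ ρ →
      volume {x : ℝ | x ∈ Set.Ioo a b ∧ ρ ≤ u' x} =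
        volume {x : ℝ | x ∈ Set.Ioo a b ∧ ρ ≤ v' x})
    (hu'_mono : MonotoneOn u' (Set.Ioo a b)) :
    ∀ x ∈ Set.Icc a b, u x ≤ v x := by
  have hu'_nonneg : ∀ t ∈ Ioo a b, 0 ≤ u' t := by
    refine fun t => nonneg_of_monotoneOn_of_intervalIntegral_nonneg hu'_mono hu'int fun s hs => ?_
    have hs' : s ∈ Icc a b := Ioo_subset_Icc_self hs
    have hus : u a ≤ u s := hu_mono (left_mem_Icc.2 (hs'.1.trans hs'.2)) hs' hs'.1
    linarith [hu_ac s hs']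
  have hlevel' : ∀ ρ, 0 ≤ ρ → volume.restrict (Ioo a b) {t | ρ ≤ u' t} =
      volume.restrict (Ioo a b) {t | ρ ≤ v' t} := fun ρ hρ => by
    rw [Measure.restrict_apply' measurableSet_Ioo, Measure.restrict_apply' measurableSet_Ioo,
      inter_comm, inter_comm _ (Ioo a b)]
    exact hlevel ρ hρ
  intro x hx
  rcases hx.1.eq_or_lt with rfl | hax
  · exact huva.le
  rw [hu_ac x hx, hv_ac x hx, huva]
  gcongr 1
  exact intervalIntegral_le_of_monotoneOn_of_measure_setOf_le_eq hu'_mono hu'_nonneg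
    (hu'int.1.mono_set Ioo_subset_Ioc_self) (hv'int.1.mono_set Ioo_subset_Ioc_self) hlevel'
    ⟨hax, hx.2⟩

/-- If `u, v ∈ W^{1,1}(a,b)` are non-decreasing, `u(a) = v(a)`, their derivatives are
equimeasurable (`Leb({u' ≥ ρ}) = Leb({v' ≥ ρ})` for all `ρ ≥ 0`), and `u'` is
non-decreasing, then `u ≤ v` on `[a,b]`. -/
theorem statement3
    (a b : ℝ) (ha : 0 ≤ a) (hab : a ≤ b) (hb : b ≤ 1)
    (u v u' v' : ℝ → ℝ)
    (hu_mono : MonotoneOn u (Set.Icc a b))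
    (hv_mono : MonotoneOn v (Set.Icc a b))
    (hu_ac : ∀ x ∈ Set.Icc a b, u x = u a + ∫ t in a..x, u' t)
    (hv_ac : ∀ x ∈ Set.Icc a b, v x = v a + ∫ t in a..x, v' t)
    (hu'int : IntervalIntegrable u' volume a b)
    (hv'int : IntervalIntegrable v' volume a b)
    (huva : u a = v a)
    (hlevel : ∀ ρ : ℝ, 0 ≤ ρ →
      volume {x : ℝ | x ∈ Set.Ioo a b ∧ ρ ≤ u' x} =
        volume {x : ℝ | x ∈ Set.Ioo a b ∧ ρ ≤ v' x})
    (hu'_mono : MonotoneOn u' (Set.Ioo a b)) :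
    ∀ x ∈ Set.Icc a b, u x ≤ v x :=
  statement3_general a b u v u' v' hu_mono hu_ac hv_ac hu'int hv'int huva hlevel hu'_mono
end

section
/- Let 0 ≤ a < b ≤ 1, let C₁, C₂ ⊂ (a,b) be disjoint Borel sets, and let τ₀ ≥ 0 and τ₂ > τ₁ ≥ 0. Then ∫_a^b (τ₀ + τ₁·Leb((a,x) ∩ C₁) + τ₂·Leb((a,x) ∩ C₂))² dx ≥ ∫₀^{Leb(C₁)} (τ₀ + τ₁ x)² dx + ∫₀^{Leb(C₂)} (τ₀ + τ₁·Leb(C₁) + τ₂ x)² dx. -/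
open MeasureTheory Set Filter

noncomputable def scdf (a : ℝ) (C : Set ℝ) (x : ℝ) : ℝ := (volume (Set.Ioo a x ∩ C)).toReal

section aux
variable {a b : ℝ} {C : Set ℝ}

lemma scdf_nonneg (a : ℝ) (C : Set ℝ) (x : ℝ) : 0 ≤ scdf a C x := ENNReal.toReal_nonneg

lemma meas_lt_top (hsub : C ⊆ Set.Ioo a b) {D : Set ℝ} (hD : D ⊆ C) : volume D < ⊤ :=
  lt_of_le_of_lt (measure_mono (hD.trans hsub))
    (by rw [Real.volume_Ioo]; exact ENNReal.ofReal_lt_top)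

lemma scdf_mono (hsub : C ⊆ Set.Ioo a b) : Monotone (scdf a C) := by
  intro x y hxy
  exact ENNReal.toReal_mono (meas_lt_top hsub (inter_subset_right)).ne
    (measure_mono (inter_subset_inter_left _ (Set.Ioo_subset_Ioo le_rfl hxy)))

lemma scdf_le (hsub : C ⊆ Set.Ioo a b) (x : ℝ) : scdf a C x ≤ (volume C).toReal :=
  ENNReal.toReal_mono (meas_lt_top hsub subset_rfl).ne (measure_mono inter_subset_right)

lemma scdf_add_le (hsub : C ⊆ Set.Ioo a b) {x y : ℝ} (hxy : x ≤ y) :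
    scdf a C y ≤ scdf a C x + (y - x) := by
  have h1 : Set.Ioo a y ∩ C ⊆ (Set.Ioo a x ∩ C) ∪ Set.Ico x y := by
    intro z hz
    rcases lt_or_ge z x with h | h
    · exact Or.inl ⟨⟨hz.1.1, h⟩, hz.2⟩
    · exact Or.inr ⟨h, hz.1.2⟩
  calc scdf a C y ≤ (volume ((Set.Ioo a x ∩ C) ∪ Set.Ico x y)).toReal := by
        refine ENNReal.toReal_mono ?_ (measure_mono h1)
        refine (lt_of_le_of_lt (measure_union_le _ _) ?_).ne
        exact ENNReal.add_lt_top.mpr ⟨meas_lt_top hsub inter_subset_right,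
          by rw [Real.volume_Ico]; exact ENNReal.ofReal_lt_top⟩
    _ ≤ (volume (Set.Ioo a x ∩ C)).toReal + (volume (Set.Ico x y)).toReal := by
        rw [← ENNReal.toReal_add (meas_lt_top hsub inter_subset_right).ne
          (by rw [Real.volume_Ico]; exact ENNReal.ofReal_lt_top.ne)]
        refine ENNReal.toReal_mono ?_ (measure_union_le _ _)
        exact (ENNReal.add_lt_top.mpr ⟨meas_lt_top hsub inter_subset_right,
          by rw [Real.volume_Ico]; exact ENNReal.ofReal_lt_top⟩).ne
    _ = scdf a C x + (y - x) := by
        rw [Real.volume_Ico, ENNReal.toReal_ofReal (by linarith)]; rfl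

lemma scdf_continuous (hsub : C ⊆ Set.Ioo a b) : Continuous (scdf a C) := by
  have : LipschitzWith 1 (scdf a C) := by
    refine LipschitzWith.of_dist_le_mul fun x y => ?_
    rw [Real.dist_eq, Real.dist_eq, NNReal.coe_one, one_mul]
    rcases le_total x y with h | h
    · rw [abs_sub_comm, abs_of_nonneg (by linarith [scdf_mono hsub h] : (0:ℝ) ≤ scdf a C y - scdf a C x),
        abs_sub_comm, abs_of_nonneg (by linarith : (0:ℝ) ≤ y - x)]
      linarith [scdf_add_le hsub h]
    · rw [abs_of_nonneg (by linarith [scdf_mono hsub h] : (0:ℝ) ≤ scdf a C x - scdf a C y),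
        abs_of_nonneg (by linarith : (0:ℝ) ≤ x - y)]
      linarith [scdf_add_le hsub h]
  exact this.continuous

lemma scdf_of_le (hx : x ≤ a) : scdf a C x = 0 := by
  unfold scdf
  rw [Set.Ioo_eq_empty (by linarith), Set.empty_inter, measure_empty, ENNReal.toReal_zero]

lemma scdf_of_ge (hsub : C ⊆ Set.Ioo a b) {x : ℝ} (hx : b ≤ x) :
    scdf a C x = (volume C).toReal := by
  unfold scdf
  congr 1
  rw [Set.inter_eq_right.mpr (hsub.trans (Set.Ioo_subset_Ioo le_rfl hx))]

end aux
section map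
variable {a b : ℝ} {C : Set ℝ}

lemma scdf_map (hab : a < b) (hC : MeasurableSet C) (hsub : C ⊆ Set.Ioo a b) :
    Measure.map (scdf a C) (volume.restrict C)
      = volume.restrict (Set.Ioc 0 (volume C).toReal) := by
  have hfin : volume C < ⊤ := meas_lt_top hsub subset_rfl
  have hmeas : Measurable (scdf a C) := (scdf_continuous hsub).measurable
  have hfinC : IsFiniteMeasure (volume.restrict C) :=
    ⟨by rw [Measure.restrict_apply_univ]; exact hfin⟩
  have hfinmap : IsFiniteMeasure (Measure.map (scdf a C) (volume.restrict C)) :=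
    Measure.isFiniteMeasure_map _ _
  refine Measure.ext_of_Iic _ _ fun s => ?_
  rw [Measure.map_apply hmeas measurableSet_Iic, Measure.restrict_apply' hC,
    Measure.restrict_apply measurableSet_Iic]
  rcases lt_or_ge s 0 with hs | hs
  · have h1 : scdf a C ⁻¹' Set.Iic s ∩ C = ∅ := by
      ext x
      simp only [Set.mem_inter_iff, Set.mem_preimage, Set.mem_Iic, Set.mem_empty_iff_false,
        iff_false]
      rintro ⟨h1, _⟩
      exact absurd (le_trans (scdf_nonneg a C x) h1) (not_le.mpr hs)
    have h2 : Set.Iic s ∩ Set.Ioc 0 (volume C).toReal = ∅ := by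
      ext x
      simp only [Set.mem_inter_iff, Set.mem_Iic, Set.mem_Ioc, Set.mem_empty_iff_false, iff_false]
      rintro ⟨h1, h2, _⟩; linarith
    rw [h1, h2]
  rcases le_or_gt (volume C).toReal s with hsL | hsL
  · have h1 : scdf a C ⁻¹' Set.Iic s ∩ C = C := by
      refine Set.inter_eq_right.mpr fun x _ => ?_
      exact le_trans (scdf_le hsub x) hsL
    have h2 : Set.Iic s ∩ Set.Ioc 0 (volume C).toReal = Set.Ioc 0 (volume C).toReal := by
      refine Set.inter_eq_right.mpr fun x hx => le_trans hx.2 hsL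
    rw [h1, h2, Real.volume_Ioc, sub_zero, ENNReal.ofReal_toReal hfin.ne]
  · -- 0 ≤ s < L
    set T : Set ℝ := {x | scdf a C x ≤ s} with hT
    have hTne : T.Nonempty := ⟨a, by simp [hT, scdf_of_le le_rfl, hs]⟩
    have hTbdd : BddAbove T := by
      refine ⟨b, fun x hx => ?_⟩
      by_contra hxb
      push_neg at hxb
      have := scdf_of_ge hsub hxb.le
      rw [hT] at hx
      simp only [Set.mem_setOf_eq] at hx
      rw [this] at hx
      linarith
    have hTclosed : IsClosed T := IsClosed.preimage (scdf_continuous hsub) isClosed_Iic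
    set xs := sSup T with hxs
    have hxsT : xs ∈ T := hTclosed.csSup_mem hTne hTbdd
    have hIic : T = Set.Iic xs := by
      ext x
      constructor
      · exact fun hx => le_csSup hTbdd hx
      · intro hx
        exact le_trans (scdf_mono hsub hx) hxsT
    have hxsb : xs < b := by
      by_contra hxb
      push_neg at hxb
      have := scdf_of_ge hsub hxb
      have : scdf a C xs ≤ s := hxsT
      rw [scdf_of_ge hsub hxb] at this
      linarith
    have hval : scdf a C xs = s := by
      by_contra hne
      have hlt : scdf a C xs < s := lt_of_le_of_ne hxsT hne
      have : ∀ᶠ y in nhds xs, scdf a C y < s :=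
        (scdf_continuous hsub).continuousAt.eventually_lt continuousAt_const hlt
      obtain ⟨ε, hε, hball⟩ := Metric.eventually_nhds_iff.mp this
      have hmem : xs + ε/2 ∈ T := by
        refine le_of_lt (hball ?_)
        rw [Real.dist_eq]
        rw [abs_of_nonneg (by linarith)]
        linarith
      have := le_csSup hTbdd hmem
      linarith
    have hpre : scdf a C ⁻¹' Set.Iic s = Set.Iic xs := by rw [← hIic]; rfl
    have hCxs : C ∩ Set.Iic xs = Set.Ioo a xs ∩ C ∪ (C ∩ {xs}) := by
      ext x
      simp only [Set.mem_inter_iff, Set.mem_Iic, Set.mem_union, Set.mem_Ioo, Set.mem_singleton_iff]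
      constructor
      · rintro ⟨hxC, hxle⟩
        rcases lt_or_eq_of_le hxle with h | h
        · exact Or.inl ⟨⟨(hsub hxC).1, h⟩, hxC⟩
        · exact Or.inr ⟨hxC, h⟩
      · rintro (⟨⟨_, h⟩, hxC⟩ | ⟨hxC, h⟩)
        · exact ⟨hxC, h.le⟩
        · exact ⟨hxC, h.le⟩
    rw [Set.inter_comm, hpre, hCxs]
    have hv : volume (Set.Ioo a xs ∩ C ∪ C ∩ {xs}) = volume (Set.Ioo a xs ∩ C) := by
      refine le_antisymm ?_ (measure_mono Set.subset_union_left)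
      calc volume (Set.Ioo a xs ∩ C ∪ C ∩ {xs})
          ≤ volume (Set.Ioo a xs ∩ C) + volume (C ∩ {xs}) := measure_union_le _ _
        _ ≤ volume (Set.Ioo a xs ∩ C) + volume ({xs} : Set ℝ) :=
            add_le_add le_rfl (measure_mono Set.inter_subset_right)
        _ = volume (Set.Ioo a xs ∩ C) := by rw [Real.volume_singleton, add_zero]
    rw [hv]
    have h2 : Set.Iic s ∩ Set.Ioc 0 (volume C).toReal = Set.Ioc 0 s := by
      ext x
      simp only [Set.mem_inter_iff, Set.mem_Iic, Set.mem_Ioc]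
      constructor
      · rintro ⟨h1, h2, _⟩; exact ⟨h2, h1⟩
      · rintro ⟨h1, h2⟩; exact ⟨h2, h1, by linarith⟩
    rw [h2, Real.volume_Ioc, sub_zero, ← hval]
    unfold scdf
    rw [ENNReal.ofReal_toReal (meas_lt_top hsub Set.inter_subset_right).ne]

end map
lemma scdf_integral (hab : a < b) (hC : MeasurableSet C) (hsub : C ⊆ Set.Ioo a b)
    {G : ℝ → ℝ} (hG : Continuous G) :
    ∫ x in C, G (scdf a C x) = ∫ t in (0:ℝ)..(volume C).toReal, G t := by
  rw [intervalIntegral.integral_of_le ENNReal.toReal_nonneg, ← scdf_map hab hC hsub,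
    MeasureTheory.integral_map (scdf_continuous hsub).measurable.aemeasurable
      hG.aestronglyMeasurable]


/-- Remark 4.4 of the paper: for disjoint Borel sets `C₁, C₂ ⊂ (a,b)`, `τ₀ ≥ 0` and
`τ₂ > τ₁ ≥ 0`,
`∫_a^b (τ₀ + τ₁ Leb((a,x)∩C₁) + τ₂ Leb((a,x)∩C₂))² dx`
is bounded below by
`∫₀^{Leb C₁} (τ₀+τ₁x)² dx + ∫₀^{Leb C₂} (τ₀+τ₁ Leb C₁+τ₂x)² dx`. -/
theorem statement4
    (a b : ℝ) (ha : 0 ≤ a) (hab : a < b) (hb : b ≤ 1)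
    (C₁ C₂ : Set ℝ) (hC₁ : MeasurableSet C₁) (hC₂ : MeasurableSet C₂)
    (hC₁sub : C₁ ⊆ Set.Ioo a b) (hC₂sub : C₂ ⊆ Set.Ioo a b)
    (hdisj : Disjoint C₁ C₂)
    (τ₀ τ₁ τ₂ : ℝ) (hτ₀ : 0 ≤ τ₀) (hτ₁ : 0 ≤ τ₁) (hτ₁₂ : τ₁ < τ₂) :
    (∫ x in (0:ℝ)..(volume C₁).toReal, (τ₀ + τ₁ * x) ^ 2) +
      (∫ x in (0:ℝ)..(volume C₂).toReal,
        (τ₀ + τ₁ * (volume C₁).toReal + τ₂ * x) ^ 2)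
      ≤ ∫ x in a..b,
          (τ₀ + τ₁ * (volume (Set.Ioo a x ∩ C₁)).toReal
              + τ₂ * (volume (Set.Ioo a x ∩ C₂)).toReal) ^ 2 := by
  set C : Set ℝ := C₁ ∪ C₂ with hCdef
  have hC : MeasurableSet C := hC₁.union hC₂
  have hCsub : C ⊆ Set.Ioo a b := Set.union_subset hC₁sub hC₂sub
  set L₁ : ℝ := (volume C₁).toReal with hL₁
  set L₂ : ℝ := (volume C₂).toReal with hL₂
  set L : ℝ := (volume C).toReal with hL
  have hL₁nonneg : 0 ≤ L₁ := ENNReal.toReal_nonneg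
  have hL₂nonneg : 0 ≤ L₂ := ENNReal.toReal_nonneg
  have hLsum : L = L₁ + L₂ := by
    rw [hL, hCdef, measure_union hdisj hC₂,
      ENNReal.toReal_add (meas_lt_top hC₁sub subset_rfl).ne (meas_lt_top hC₂sub subset_rfl).ne]
  have hsplit : ∀ x, scdf a C x = scdf a C₁ x + scdf a C₂ x := by
    intro x
    unfold scdf
    rw [hCdef, Set.inter_union_distrib_left,
      measure_union (hdisj.mono Set.inter_subset_right Set.inter_subset_right)
        (measurableSet_Ioo.inter hC₂),
      ENNReal.toReal_add (meas_lt_top hC₁sub Set.inter_subset_right).ne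
        (meas_lt_top hC₂sub Set.inter_subset_right).ne]
  set ψ : ℝ → ℝ := fun t => τ₀ + τ₁ * t + (τ₂ - τ₁) * max 0 (t - L₁) with hψ
  have hψcont : Continuous ψ :=
    (continuous_const.add (continuous_const.mul continuous_id)).add
      (continuous_const.mul (continuous_const.max (continuous_id.sub continuous_const)))
  set g : ℝ → ℝ := fun t => ψ t ^ 2 with hg
  have hgcont : Continuous g := hψcont.pow 2
  set f : ℝ → ℝ := fun x => τ₀ + τ₁ * scdf a C₁ x + τ₂ * scdf a C₂ x with hf
  have hm₁cont : Continuous (scdf a C₁) := scdf_continuous hC₁sub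
  have hm₂cont : Continuous (scdf a C₂) := scdf_continuous hC₂sub
  have hfcont : Continuous f :=
    (continuous_const.add (continuous_const.mul hm₁cont)).add (continuous_const.mul hm₂cont)
  -- pointwise bound
  have hpt : ∀ x ∈ Set.Icc a b, C.indicator (fun x => g (scdf a C x)) x ≤ f x ^ 2 := by
    intro x _
    by_cases hx : x ∈ C
    · rw [Set.indicator_of_mem hx]
      have hmax : max 0 (scdf a C₁ x + scdf a C₂ x - L₁) ≤ scdf a C₂ x := by
        refine max_le (scdf_nonneg a C₂ x) ?_
        have := scdf_le hC₁sub x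
        linarith
      have hψle : ψ (scdf a C x) ≤ f x := by
        rw [hψ, hf]
        simp only
        rw [hsplit x]
        nlinarith [hmax, sub_nonneg.mpr hτ₁₂.le]
      have hψnonneg : 0 ≤ ψ (scdf a C x) := by
        rw [hψ]
        simp only
        have h1 : 0 ≤ max 0 (scdf a C x - L₁) := le_max_left 0 _
        nlinarith [scdf_nonneg a C x, sub_nonneg.mpr hτ₁₂.le]
      exact pow_le_pow_left₀ hψnonneg hψle 2
    · rw [Set.indicator_of_notMem hx]
      exact sq_nonneg _
  -- integrability
  have hint₂ : IntervalIntegrable (fun x => f x ^ 2) volume a b :=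
    ((hfcont.pow 2)).intervalIntegrable a b
  have hint₁ : IntervalIntegrable (C.indicator fun x => g (scdf a C x)) volume a b := by
    have hbase : IntervalIntegrable (fun x => g (scdf a C x)) volume a b :=
      (hgcont.comp (scdf_continuous hCsub)).intervalIntegrable a b
    rw [intervalIntegrable_iff] at hbase ⊢
    exact hbase.indicator hC
  -- main chain
  have key : ∫ x in a..b, C.indicator (fun x => g (scdf a C x)) x
      = (∫ x in (0:ℝ)..L₁, (τ₀ + τ₁ * x) ^ 2) +
        ∫ x in (0:ℝ)..L₂, (τ₀ + τ₁ * L₁ + τ₂ * x) ^ 2 := by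
    rw [intervalIntegral.integral_of_le hab.le, MeasureTheory.integral_indicator hC,
      Measure.restrict_restrict hC,
      Set.inter_eq_left.mpr (hCsub.trans Set.Ioo_subset_Ioc_self),
      scdf_integral hab hC hCsub hgcont, ← hL]
    have hsplitint : ∫ t in (0:ℝ)..L, g t
        = (∫ t in (0:ℝ)..L₁, g t) + ∫ t in L₁..L, g t := by
      rw [intervalIntegral.integral_add_adjacent_intervals
        (hgcont.intervalIntegrable 0 L₁) (hgcont.intervalIntegrable L₁ L)]
    rw [hsplitint]
    congr 1
    · refine intervalIntegral.integral_congr fun t ht => ?_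
      rw [Set.uIcc_of_le hL₁nonneg] at ht
      rw [hg, hψ]
      simp only
      rw [max_eq_left (by linarith [ht.2])]
      ring
    · have hcomp : ∫ x in (0:ℝ)..L₂, g (x + L₁) = ∫ t in L₁..L, g t := by
        rw [intervalIntegral.integral_comp_add_right, zero_add, hLsum, add_comm L₂ L₁]
      rw [← hcomp]
      refine intervalIntegral.integral_congr fun t ht => ?_
      rw [Set.uIcc_of_le hL₂nonneg] at ht
      rw [hg, hψ]
      simp only
      rw [add_sub_cancel_right, max_eq_right ht.1]
      ring
  calc (∫ x in (0:ℝ)..L₁, (τ₀ + τ₁ * x) ^ 2) +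
        ∫ x in (0:ℝ)..L₂, (τ₀ + τ₁ * L₁ + τ₂ * x) ^ 2
      = ∫ x in a..b, C.indicator (fun x => g (scdf a C x)) x := key.symm
    _ ≤ ∫ x in a..b, f x ^ 2 := intervalIntegral.integral_mono_on hab.le hint₁ hint₂ hpt
    _ = _ := by rfl
end

section
/- Assume (H1)–(H5). Let C > 0, 0 < η < η₀, and 0 < ε ≤ η^{q+1}, and let v ∈ V satisfy I^ε(v) ≤ C. Then there exists a constant c > 0, depending only on C and on the data of W, such that |λ₃^η(v) − z₃₁^{−1}(1 − z₂₁ λ₂^η(v))| ≤ c η. -/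
/-!
Since `v(0) = v(1) = 0`, `∫₀¹ v' = 0`. Split `(0,1)` into the sets `A_k` where `v'` is
`η`-close to the well `z_k` and the remainder `B`. On `A_k`, `∫ v' = z_k λ_k + O(η)`. On `B`
the coercivity (H5) gives `W(v') ≥ c₀ η^q`, whereas `∫ W(v') ≤ C ε² ≤ C η^(q+1)`, so
`|B| = O(η)`; the `p`-growth of `W` bounds `|v'|` by `1 + (c₂ + W(v'))/c₁`, so also
`∫_B v' = O(η)`. Hence `z₁λ₁ + z₂λ₂ + z₃λ₃ = O(η)` and `λ₁ + λ₂ + λ₃ = 1 - O(η)`;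
eliminating `λ₁` gives the estimate.
-/

open MeasureTheory Set Filter

/-- The volume fraction `λ^η(v)` at the well `z`:
the Lebesgue measure of `{x ∈ (0,1) : |v'(x) − z| ≤ η}`. -/
noncomputable def lamEta (v' : ℝ → ℝ) (z η : ℝ) : ℝ :=
  (volume {x : ℝ | x ∈ Set.Ioo (0:ℝ) 1 ∧ |v' x - z| ≤ η}).toReal

/-- `E₀`-type constant: `2∫_{a}^{b} √(W(s)) ds`. -/
noncomputable def cE (W : ℝ → ℝ) (a b : ℝ) : ℝ := 2 * ∫ s in a..b, Real.sqrt (W s)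

/-- The constant `A₀ = (3/2)^{2/3} E₀^{2/3} (z₂² z₂₁)^{1/3}`. -/
noncomputable def cA₀ (W : ℝ → ℝ) (z₁ z₂ : ℝ) : ℝ :=
  (3/2 : ℝ) ^ ((2:ℝ)/3) * (cE W z₁ z₂) ^ ((2:ℝ)/3) * (z₂ ^ 2 * (1 - z₂ / z₁)) ^ ((1:ℝ)/3)

/-- The constant `B₀ = (3/2)^{2/3} (E₀+E₁)^{2/3} (z₃² z₃₁)^{1/3}`. -/
noncomputable def cB₀ (W : ℝ → ℝ) (z₁ z₂ z₃ : ℝ) : ℝ :=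
  (3/2 : ℝ) ^ ((2:ℝ)/3) * (cE W z₁ z₂ + cE W z₂ z₃) ^ ((2:ℝ)/3) *
    (z₃ ^ 2 * (1 - z₃ / z₁)) ^ ((1:ℝ)/3)

namespace MemV

variable {p : ℝ} {u u' u'' : ℝ → ℝ}

theorem continuousOn_deriv_s13 (hu : MemV p u u' u'') : ContinuousOn u' (Icc 0 1) := by
  obtain ⟨-, -, -, hu', -, hu'', -⟩ := hu
  have h := intervalIntegral.continuousOn_primitive_interval' hu'' left_mem_uIcc
  rw [uIcc_of_le zero_le_one] at h
  exact (continuousOn_const.add h).congr hu'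

theorem continuousOn_s13 (hu : MemV p u u' u'') : ContinuousOn u (Icc 0 1) := by
  obtain ⟨-, -, hu, -, hu', -⟩ := hu
  have h := intervalIntegral.continuousOn_primitive_interval' hu' left_mem_uIcc
  rw [uIcc_of_le zero_le_one] at h
  exact h.congr hu

theorem setIntegral_deriv_eq_zero (hu : MemV p u u' u'') : ∫ x in Ioo 0 1, u' x = 0 := by
  obtain ⟨-, hu₁, hu, -⟩ := hu
  rw [← integral_Ioc_eq_integral_Ioo, ← intervalIntegral.integral_of_le zero_le_one,
    ← hu 1 (right_mem_Icc.2 zero_le_one), hu₁]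

theorem setIntegral_W_le_mul_Ieps (hu : MemV p u u' u'') {W : ℝ → ℝ} (hWc : Continuous W)
    {ε : ℝ} (hε : ε ≠ 0) :
    ∫ x in Ioo 0 1, W (u' x) ≤ ε ^ 2 * Ieps W ε u u' u'' := by
  have hu'' : IntervalIntegrable (fun x => u'' x ^ 2) volume 0 1 := hu.2.2.2.2.2.2.2
  have hWu : IntervalIntegrable (fun x => W (u' x)) volume 0 1 :=
    (hWc.comp_continuousOn hu.continuousOn_deriv_s13).intervalIntegrable_of_Icc zero_le_one
  have hu2 : IntervalIntegrable (fun x => u x ^ 2) volume 0 1 :=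
    (hu.continuousOn_s13.pow 2).intervalIntegrable_of_Icc zero_le_one
  have h : ∫ x in (0:ℝ)..1, (ε ^ 2)⁻¹ * W (u' x) ≤ Ieps W ε u u' u'' := by
    refine intervalIntegral.integral_mono_on zero_le_one (hWu.const_mul _)
      (((hu''.const_mul _).add (hWu.const_mul _)).add (hu2.const_mul _))
      fun x _ => ?_
    have h₁ : 0 ≤ ε ^ 4 * u'' x ^ 2 := by positivity
    have h₂ : 0 ≤ (ε ^ 2)⁻¹ * u x ^ 2 := by positivity
    linarith
  rw [intervalIntegral.integral_const_mul, intervalIntegral.integral_of_le zero_le_one,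
    integral_Ioc_eq_integral_Ioo, inv_mul_le_iff₀ (by positivity)] at h
  exact h

end MemV

theorem abs_setIntegral_biUnion_sub_sum_le {α ι : Type*} [MeasurableSpace α] {μ : Measure α}
    {s : Finset ι} {A : ι → Set α} {f : α → ℝ} {z : ι → ℝ} {η : ℝ}
    (hA : ∀ i ∈ s, MeasurableSet (A i)) (hd : (s : Set ι).PairwiseDisjoint A)
    (hμ : ∀ i ∈ s, μ (A i) < ⊤) (hf : ∀ i ∈ s, IntegrableOn f (A i) μ)
    (hclose : ∀ i ∈ s, ∀ x ∈ A i, |f x - z i| ≤ η) :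
    |∫ x in ⋃ i ∈ s, A i, f x ∂μ - ∑ i ∈ s, z i * μ.real (A i)|
      ≤ η * ∑ i ∈ s, μ.real (A i) := by
  rw [integral_biUnion_finset s hA hd hf, ← Finset.sum_sub_distrib, Finset.mul_sum]
  refine (Finset.abs_sum_le_sum_abs _ _).trans (Finset.sum_le_sum fun i hi => ?_)
  have h := norm_setIntegral_le_of_norm_le_const (f := fun x => f x - z i) (hμ i hi)
    fun x hx => hclose i hi x hx
  rwa [integral_sub (hf i hi) (integrableOn_const (hμ i hi).ne), setIntegral_const, smul_eq_mul,
    mul_comm, Real.norm_eq_abs] at h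

def wellSet (v' : ℝ → ℝ) (z η : ℝ) : Set ℝ := {x | x ∈ Ioo 0 1 ∧ |v' x - z| ≤ η}

def offWellSet (v' : ℝ → ℝ) (Z : Finset ℝ) (η : ℝ) : Set ℝ :=
  Ioo 0 1 \ ⋃ z ∈ Z, wellSet v' z η

section Wells

variable {v' : ℝ → ℝ} {η : ℝ}

theorem lamEta_eq_measureReal (z : ℝ) : lamEta v' z η = volume.real (wellSet v' z η) := rfl

theorem wellSet_subset (z : ℝ) : wellSet v' z η ⊆ Ioo 0 1 := fun _ hx => hx.1

theorem measurableSet_wellSet (hv' : ContinuousOn v' (Icc 0 1)) (z : ℝ) :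
    MeasurableSet (wellSet v' z η) := by
  have h : wellSet v' z η = Ioo 0 1 ∩ (Icc 0 1 ∩ v' ⁻¹' Metric.closedBall z η) := by
    ext x
    simp only [wellSet, mem_ofPred_eq, mem_inter_iff, mem_preimage, Metric.mem_closedBall,
      Real.dist_eq]
    exact ⟨fun h => ⟨h.1, Ioo_subset_Icc_self h.1, h.2⟩, fun h => ⟨h.1, h.2.2⟩⟩
  rw [h]
  exact measurableSet_Ioo.inter
    (hv'.preimage_isClosed_of_isClosed isClosed_Icc Metric.isClosed_closedBall).measurableSet

theorem volume_wellSet_lt_top (z : ℝ) : volume (wellSet v' z η) < ⊤ :=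
  (measure_mono (wellSet_subset z)).trans_lt measure_Ioo_lt_top

theorem disjoint_wellSet {z z' : ℝ} (h : 2 * η < z' - z) :
    Disjoint (wellSet v' z η) (wellSet v' z' η) := by
  refine Set.disjoint_left.2 fun x hx hx' => ?_
  have := abs_le.1 hx.2
  have := abs_le.1 hx'.2
  linarith

theorem pairwiseDisjoint_wellSet {Z : Set ℝ}
    (hZ : ∀ z ∈ Z, ∀ z' ∈ Z, z < z' → 2 * η < z' - z) :
    Z.PairwiseDisjoint (wellSet v' · η) := by
  intro z hz z' hz' hne
  rcases hne.lt_or_gt with h | h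
  · exact disjoint_wellSet (hZ z hz z' hz' h)
  · exact (disjoint_wellSet (hZ z' hz' z hz h)).symm

theorem biUnion_wellSet_subset {Z : Finset ℝ} : ⋃ z ∈ Z, wellSet v' z η ⊆ Ioo 0 1 :=
  iUnion₂_subset fun z _ => wellSet_subset z

theorem measurableSet_biUnion_wellSet {Z : Finset ℝ} (hv' : ContinuousOn v' (Icc 0 1)) :
    MeasurableSet (⋃ z ∈ Z, wellSet v' z η) :=
  Finset.measurableSet_biUnion Z fun z _ => measurableSet_wellSet hv' z

theorem offWellSet_subset {Z : Finset ℝ} : offWellSet v' Z η ⊆ Ioo 0 1 := sdiff_subset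

theorem measurableSet_offWellSet {Z : Finset ℝ} (hv' : ContinuousOn v' (Icc 0 1)) :
    MeasurableSet (offWellSet v' Z η) :=
  measurableSet_Ioo.diff (measurableSet_biUnion_wellSet hv')

theorem lt_abs_of_mem_offWellSet {Z : Finset ℝ} {x z : ℝ} (hx : x ∈ offWellSet v' Z η)
    (hz : z ∈ Z) : η < |v' x - z| :=
  not_le.1 fun h => hx.2 (mem_biUnion hz ⟨hx.1, h⟩)

variable {Z : Finset ℝ} (hv' : ContinuousOn v' (Icc 0 1))
  (hd : (Z : Set ℝ).PairwiseDisjoint (wellSet v' · η))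
include hv' hd

theorem sum_lamEta_add_measureReal_offWellSet :
    ∑ z ∈ Z, lamEta v' z η + volume.real (offWellSet v' Z η) = 1 := by
  have h := measureReal_inter_add_sdiff (μ := volume) (s := Ioo 0 1)
    (measurableSet_biUnion_wellSet (Z := Z) (η := η) hv') measure_Ioo_lt_top.ne
  rwa [inter_eq_right.2 biUnion_wellSet_subset, Real.volume_real_Ioo_of_le zero_le_one, sub_zero,
    measureReal_biUnion_finset hd (fun z _ => measurableSet_wellSet hv' z)
      (fun z _ => (volume_wellSet_lt_top z).ne)] at h

theorem abs_sum_mul_lamEta_add_setIntegral_offWellSet_le (hv : ∫ x in Ioo 0 1, v' x = 0) :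
    |∑ z ∈ Z, z * lamEta v' z η + ∫ x in offWellSet v' Z η, v' x|
      ≤ η * ∑ z ∈ Z, lamEta v' z η := by
  have hint : IntegrableOn v' (Ioo 0 1) :=
    (hv'.integrableOn_Icc).mono_set Ioo_subset_Icc_self
  have hsplit := integral_inter_add_sdiff (μ := volume)
    (measurableSet_biUnion_wellSet (Z := Z) (η := η) hv') hint
  rw [inter_eq_right.2 biUnion_wellSet_subset, hv] at hsplit
  have h := abs_setIntegral_biUnion_sub_sum_le (μ := volume) (f := v') (z := id)
    (fun z _ => measurableSet_wellSet hv' z) hd (fun z _ => volume_wellSet_lt_top z)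
    (fun z _ => hint.mono_set (wellSet_subset z)) fun z _ x hx => hx.2
  simp only [lamEta_eq_measureReal, offWellSet]
  rw [← abs_neg]
  convert h using 2
  simp only [id]
  linarith

end Wells

theorem abs_le_one_add_div_of_le {p c₁ c₂ s w : ℝ} (hp : 1 ≤ p) (hc₁ : 0 < c₁)
    (h : c₁ * |s| ^ p - c₂ ≤ w) : |s| ≤ 1 + (c₂ + w) / c₁ := by
  have hw : c₁ * |s| ^ p ≤ c₂ + w := by linarith
  rcases le_or_gt |s| 1 with hs | hs
  · have : 0 ≤ (c₂ + w) / c₁ :=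
      div_nonneg ((mul_nonneg hc₁.le (by positivity)).trans hw) hc₁.le
    linarith
  · have : |s| ≤ (c₂ + w) / c₁ := by
      rw [le_div_iff₀' hc₁]
      exact (mul_le_mul_of_nonneg_left (Real.self_le_rpow_of_one_le hs.le hp) hc₁.le).trans hw
    linarith

theorem abs_setIntegral_le_of_lower_bound {W v' : ℝ → ℝ} {p c₁ c₂ : ℝ} (hWc : Continuous W)
    (hW0 : ∀ s, 0 ≤ W s) (hp : 1 ≤ p) (hc₁ : 0 < c₁) (hlb : ∀ s, c₁ * |s| ^ p - c₂ ≤ W s)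
    (hv' : ContinuousOn v' (Icc 0 1)) {B : Set ℝ} (hB : MeasurableSet B) (hBS : B ⊆ Ioo 0 1) :
    |∫ x in B, v' x| ≤ (1 + c₂ / c₁) * volume.real B + (∫ x in Ioo 0 1, W (v' x)) / c₁ := by
  have hWv : IntegrableOn (fun x => W (v' x)) (Ioo 0 1) :=
    (hWc.comp_continuousOn hv').integrableOn_Icc.mono_set Ioo_subset_Icc_self
  have hBfin : volume B < ⊤ := (measure_mono hBS).trans_lt measure_Ioo_lt_top
  have hconst : IntegrableOn (fun _ => 1 + c₂ / c₁) B := integrableOn_const hBfin.ne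
  have hWB : IntegrableOn (fun x => W (v' x) / c₁) B := (hWv.mono_set hBS).div_const c₁
  calc |∫ x in B, v' x| ≤ ∫ x in B, |v' x| := abs_integral_le_integral_abs
    _ ≤ ∫ x in B, (1 + c₂ / c₁ + W (v' x) / c₁) := by
      refine setIntegral_mono_on ((hv'.integrableOn_Icc.mono_set
        (hBS.trans Ioo_subset_Icc_self)).abs) (hconst.add hWB) hB fun x _ => ?_
      have := abs_le_one_add_div_of_le hp hc₁ (hlb (v' x))
      rwa [add_div, ← add_assoc] at this
    _ = (1 + c₂ / c₁) * volume.real B + (∫ x in B, W (v' x)) / c₁ := by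
      rw [integral_add hconst hWB, setIntegral_const, smul_eq_mul, mul_comm, integral_div]
    _ ≤ (1 + c₂ / c₁) * volume.real B + (∫ x in Ioo 0 1, W (v' x)) / c₁ := by
      have := setIntegral_mono_set hWv (Eventually.of_forall fun x => hW0 (v' x)) hBS.eventuallyLE
      gcongr

theorem sq_le_rpow_mul_self {ε η q : ℝ} (hε : 0 ≤ ε) (hη : 0 < η) (hη₁ : η ≤ 1) (hq : 0 ≤ q + 1)
    (hεη : ε ≤ η ^ (q + 1)) : ε ^ 2 ≤ η ^ q * η :=
  calc ε ^ 2 ≤ (η ^ (q + 1)) ^ 2 := pow_le_pow_left₀ hε hεη 2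
    _ ≤ η ^ (q + 1) := pow_le_of_le_one (by positivity) (Real.rpow_le_one hη.le hη₁ hq) two_ne_zero
    _ = η ^ q * η := Real.rpow_add_one hη.ne' q

theorem abs_sub_inv_mul_le_of_balance {z₁ z₂ z₃ ℓ₁ ℓ₂ ℓ₃ b J β K η : ℝ} (hz₁ : z₁ ≠ 0)
    (hz₁₃ : z₁ < z₃) (hη : 0 ≤ η) (hsum : ℓ₁ + ℓ₂ + ℓ₃ + b = 1) (hb₀ : 0 ≤ b) (hb : b ≤ β * η)
    (hJ : |J| ≤ K * η) (hbal : |z₁ * ℓ₁ + z₂ * ℓ₂ + z₃ * ℓ₃ + J| ≤ η * (ℓ₁ + ℓ₂ + ℓ₃)) :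
    |ℓ₃ - (1 - z₃ / z₁)⁻¹ * (1 - (1 - z₂ / z₁) * ℓ₂)| ≤ (1 + K + |z₁| * β) / (z₃ - z₁) * η := by
  have h₃₁ : 0 < z₃ - z₁ := sub_pos.2 hz₁₃
  have hkey : (z₃ - z₁) * (ℓ₃ - (1 - z₃ / z₁)⁻¹ * (1 - (1 - z₂ / z₁) * ℓ₂))
      = (z₁ * ℓ₁ + z₂ * ℓ₂ + z₃ * ℓ₃ + J) - J + z₁ * b := by
    have : z₁ - z₃ ≠ 0 := by linarith
    rw [show 1 - z₃ / z₁ = (z₁ - z₃) / z₁ by field_simp, inv_div]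
    field_simp
    linear_combination (z₁ * z₃ - z₁ ^ 2) * hsum
  have hz₁b : |z₁ * b| ≤ |z₁| * β * η := by
    rw [abs_mul, abs_of_nonneg hb₀, mul_assoc]
    exact mul_le_mul_of_nonneg_left hb (abs_nonneg _)
  have hηℓ : η * (ℓ₁ + ℓ₂ + ℓ₃) ≤ η := mul_le_of_le_one_right hη (by linarith)
  rw [div_mul_eq_mul_div, le_div_iff₀ h₃₁, ← abs_of_pos h₃₁, ← abs_mul, mul_comm, hkey]
  calc _ ≤ |z₁ * ℓ₁ + z₂ * ℓ₂ + z₃ * ℓ₃ + J - J| + |z₁ * b| := abs_add_le _ _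
    _ ≤ |z₁ * ℓ₁ + z₂ * ℓ₂ + z₃ * ℓ₃ + J| + |J| + |z₁ * b| := by gcongr; exact abs_sub _ _
    _ ≤ (1 + K + |z₁| * β) * η := by linarith

namespace HypW

variable {W : ℝ → ℝ} {p q c₀ c₁ c₂ c₃ η₀ z₁ z₂ z₃ : ℝ} (hW : HypW W p q c₀ c₁ c₂ c₃ η₀ z₁ z₂ z₃)
include hW

theorem sum_wells (f : ℝ → ℝ) : ∑ z ∈ {z₁, z₂, z₃}, f z = f z₁ + f z₂ + f z₃ := by
  have h₁₂ := hW.hz₁.trans hW.hz₂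
  rw [Finset.sum_insert (by simp [h₁₂.ne, (h₁₂.trans hW.hz₂₃).ne]), Finset.sum_pair hW.hz₂₃.ne,
    add_assoc]

theorem pairwiseDisjoint_wellSet {v' : ℝ → ℝ} {η : ℝ} (hη : η < η₀) :
    (({z₁, z₂, z₃} : Finset ℝ) : Set ℝ).PairwiseDisjoint (wellSet v' · η) := by
  have h := hW.hη₀lt
  simp only [lt_min_iff] at h
  refine _root_.pairwiseDisjoint_wellSet fun z hz z' hz' hzz' => ?_
  simp only [Finset.coe_insert, Finset.coe_singleton, mem_insert_iff, mem_singleton_iff] at hz hz'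
  rcases hz with rfl | rfl | rfl <;> rcases hz' with rfl | rfl | rfl <;> linarith

theorem mul_rpow_le_W {η s : ℝ} (hη : 0 ≤ η) (hηη₀ : η ≤ η₀) (h₁ : η < |s - z₁|)
    (h₂ : η < |s - z₂|) (h₃ : η < |s - z₃|) : c₀ * η ^ q ≤ W s := by
  have hle {t : ℝ} (ht : η ≤ t) : η ^ q ≤ t ^ q := Real.rpow_le_rpow hη ht hW.hq.le
  exact (mul_le_mul_of_nonneg_left (le_min (le_min (hle h₁.le) (le_min (hle h₂.le) (hle h₃.le)))
    (hle hηη₀)) hW.hc₀.le).trans (hW.coer s)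

theorem measureReal_offWellSet_le {v' : ℝ → ℝ} {η C : ℝ} (hv' : ContinuousOn v' (Icc 0 1))
    (hη : 0 < η) (hηη₀ : η ≤ η₀) (hE : ∫ x in Ioo 0 1, W (v' x) ≤ η ^ q * η * C) :
    volume.real (offWellSet v' {z₁, z₂, z₃} η) ≤ C / c₀ * η := by
  have hWv : IntegrableOn (fun x => W (v' x)) (Ioo 0 1) :=
    (hW.cont.comp_continuousOn hv').integrableOn_Icc.mono_set Ioo_subset_Icc_self
  have hmarkov := setIntegral_ge_of_const_le_real (s := offWellSet v' {z₁, z₂, z₃} η)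
    (measurableSet_offWellSet hv')
    ((measure_mono offWellSet_subset).trans_lt measure_Ioo_lt_top).ne
    (fun x hx => hW.mul_rpow_le_W hη.le hηη₀ (lt_abs_of_mem_offWellSet hx (by simp))
      (lt_abs_of_mem_offWellSet hx (by simp)) (lt_abs_of_mem_offWellSet hx (by simp)))
    (hWv.mono_set offWellSet_subset)
  have hsub := setIntegral_mono_set hWv (Eventually.of_forall fun x => hW.nonneg (v' x))
    (offWellSet_subset (v' := v') (Z := {z₁, z₂, z₃}) (η := η)).eventuallyLE
  have h : (volume.real (offWellSet v' {z₁, z₂, z₃} η) * c₀) * η ^ q ≤ (C * η) * η ^ q := by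
    linarith
  rw [div_mul_eq_mul_div, le_div_iff₀ hW.hc₀]
  exact le_of_mul_le_mul_right h (Real.rpow_pos_of_pos hη q)

end HypW

/-- Relation between the volume fractions of low-energy states:
`|λ₃^η(v) − z₃₁⁻¹ (1 − z₂₁ λ₂^η(v))| ≤ c η`. -/
theorem statement13
    (W : ℝ → ℝ) (p q c₀ c₁ c₂ c₃ η₀ z₁ z₂ z₃ : ℝ)
    (hW : HypW W p q c₀ c₁ c₂ c₃ η₀ z₁ z₂ z₃)
    (C : ℝ) (hC : 0 < C) :
    ∃ c : ℝ, 0 < c ∧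
      ∀ η ε : ℝ, ∀ v v' v'' : ℝ → ℝ,
        0 < η → η < η₀ → 0 < ε → ε ≤ η ^ (q + 1) →
        MemV p v v' v'' → Ieps W ε v v' v'' ≤ C →
        |lamEta v' z₃ η - (1 - z₃ / z₁)⁻¹ * (1 - (1 - z₂ / z₁) * lamEta v' z₂ η)|
          ≤ c * η := by
  obtain ⟨hc₀, hc₁, hc₂, hz₁, hz₁₃⟩ : 0 < c₀ ∧ 0 < c₁ ∧ 0 < c₂ ∧ z₁ < 0 ∧ z₁ < z₃ :=
    ⟨hW.hc₀, hW.hc₁, hW.hc₂, hW.hz₁, by linarith [hW.hz₁, hW.hz₂, hW.hz₂₃]⟩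
  set K := (1 + c₂ / c₁) * (C / c₀) + C / c₁
  have hK : 0 < K := by positivity
  refine ⟨(1 + K + |z₁| * (C / c₀)) / (z₃ - z₁), by have := sub_pos.2 hz₁₃; positivity, ?_⟩
  intro η ε v v' v'' hη hηη₀ hε hεη hv hI
  have hv' := hv.continuousOn_deriv_s13
  have hη₁ : η ≤ 1 := (hηη₀.trans (lt_min_iff.1 hW.hη₀lt).1).le
  have hE : ∫ x in Ioo 0 1, W (v' x) ≤ η ^ q * η * C :=
    (hv.setIntegral_W_le_mul_Ieps hW.cont hε.ne').trans <|
      (mul_le_mul_of_nonneg_left hI (sq_nonneg ε)).trans <| mul_le_mul_of_nonneg_right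
        (sq_le_rpow_mul_self hε.le hη hη₁ (by linarith [hW.hq]) hεη) hC.le
  have hd := hW.pairwiseDisjoint_wellSet (v' := v') hηη₀
  have hb := hW.measureReal_offWellSet_le hv' hη hηη₀.le hE
  have hJ : |∫ x in offWellSet v' {z₁, z₂, z₃} η, v' x| ≤ K * η :=
    calc _ ≤ _ := abs_setIntegral_le_of_lower_bound hW.cont hW.nonneg hW.hp.le hc₁ hW.lb hv'
          (measurableSet_offWellSet hv') offWellSet_subset
      _ ≤ (1 + c₂ / c₁) * (C / c₀ * η) + 1 * η * C / c₁ := by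
        gcongr
        exact hE.trans (by gcongr; exact Real.rpow_le_one hη.le hη₁ hW.hq.le)
      _ = K * η := by ring
  have hsum := sum_lamEta_add_measureReal_offWellSet hv' hd
  have hbal := abs_sum_mul_lamEta_add_setIntegral_offWellSet_le hv' hd
    hv.setIntegral_deriv_eq_zero
  simp only [hW.sum_wells] at hsum hbal
  exact abs_sub_inv_mul_le_of_balance hz₁.ne hz₁₃ hη.le hsum measureReal_nonneg hb hJ hbal
end

section
/- Let z₁ < 0 < z₂ < z₃ be real numbers with z₃ > 3|z₁|, and let E₀, E₁ > 0. Then hypothesis (H6) fails: there exists y ≥ 0 such that f₆(y) < (A₀ + B₀ y)³, where f₆(y) = 9(E₀+E₁)²(z₂² + y³z₃² + 3yz₂(yz₃+z₂)), A₀ = (3/2)^{2/3} E₀^{2/3} (z₂² z₂₁)^{1/3}, B₀ = (3/2)^{2/3} (E₀+E₁)^{2/3} (z₃² z₃₁)^{1/3}, z₂₁ = 1 − z₂/z₁, z₃₁ = 1 − z₃/z₁. -/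
private lemma cube23 (x : ℝ) (hx : 0 ≤ x) : (x ^ ((2:ℝ)/3)) ^ 3 = x ^ 2 := by
  rw [← Real.rpow_natCast (x ^ ((2:ℝ)/3)) 3, ← Real.rpow_mul hx,
    ← Real.rpow_natCast x 2]
  norm_num

private lemma cube13 (x : ℝ) (hx : 0 ≤ x) : (x ^ ((1:ℝ)/3)) ^ 3 = x := by
  rw [← Real.rpow_natCast (x ^ ((1:ℝ)/3)) 3, ← Real.rpow_mul hx]
  norm_num

private lemma auxpoly (z₂ z₃ ε y : ℝ) (h2 : 0 < z₂) (h23 : z₂ < z₃)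
    (hε : 0 < ε) (hy : 1 ≤ y) (he : ε * y = 7 + ε) :
    z₂ ^ 2 + y ^ 3 * z₃ ^ 2 + 3 * y * z₂ * (y * z₃ + z₂)
      < (1 + ε) * z₃ ^ 2 * y ^ 3 := by
  have hy0 : 0 < y := by linarith
  have hy2 : y ≤ y ^ 2 := by nlinarith
  have h1 : z₂ ^ 2 ≤ z₃ ^ 2 * y ^ 2 := by nlinarith
  have h2' : 3 * y ^ 2 * z₂ * z₃ ≤ 3 * z₃ ^ 2 * y ^ 2 := by nlinarith
  have h3 : 3 * y * z₂ ^ 2 ≤ 3 * z₃ ^ 2 * y ^ 2 := by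
    nlinarith [mul_nonneg (by nlinarith : (0:ℝ) ≤ y ^ 2 - y) (sq_nonneg z₂),
      mul_nonneg (sq_nonneg y) (by nlinarith : (0:ℝ) ≤ z₃ ^ 2 - z₂ ^ 2)]
  have h4 : 7 * z₃ ^ 2 * y ^ 2 < (7 + ε) * z₃ ^ 2 * y ^ 2 := by nlinarith
  have h5 : ε * z₃ ^ 2 * y ^ 3 = (7 + ε) * z₃ ^ 2 * y ^ 2 := by
    calc ε * z₃ ^ 2 * y ^ 3 = (ε * y) * (z₃ ^ 2 * y ^ 2) := by ring
      _ = (7 + ε) * z₃ ^ 2 * y ^ 2 := by rw [he]; ring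
  nlinarith [h1, h2', h3, h4, h5]

/-- If `z₃ > 3|z₁|` then hypothesis (H6) fails: there is `y ≥ 0` with
`f₆(y) < (A₀ + B₀ y)³`. -/
theorem statement17
    (z₁ z₂ z₃ E₀ E₁ z₂₁ z₃₁ A₀ B₀ : ℝ)
    (hz₁ : z₁ < 0) (hz₂ : 0 < z₂) (hz₂₃ : z₂ < z₃)
    (hz₃big : 3 * |z₁| < z₃)
    (hE₀ : 0 < E₀) (hE₁ : 0 < E₁)
    (hz₂₁ : z₂₁ = 1 - z₂ / z₁) (hz₃₁ : z₃₁ = 1 - z₃ / z₁)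
    (hA₀ : A₀ = (3/2 : ℝ) ^ ((2:ℝ)/3) * E₀ ^ ((2:ℝ)/3) * (z₂ ^ 2 * z₂₁) ^ ((1:ℝ)/3))
    (hB₀ : B₀ = (3/2 : ℝ) ^ ((2:ℝ)/3) * (E₀ + E₁) ^ ((2:ℝ)/3) *
      (z₃ ^ 2 * z₃₁) ^ ((1:ℝ)/3)) :
    ∃ y : ℝ, 0 ≤ y ∧
      9 * (E₀ + E₁) ^ 2 * (z₂ ^ 2 + y ^ 3 * z₃ ^ 2 + 3 * y * z₂ * (y * z₃ + z₂))
        < (A₀ + B₀ * y) ^ 3 := by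
  have habs : |z₁| = -z₁ := abs_of_neg hz₁
  have hz₃pos : 0 < z₃ := lt_trans hz₂ hz₂₃
  have hdiv : z₃ / z₁ < -3 := by
    rw [div_lt_iff_of_neg hz₁]; nlinarith [hz₃big, habs]
  have hz₃₁4 : 4 < z₃₁ := by rw [hz₃₁]; linarith
  have hz₂₁pos : 0 < z₂₁ := by
    have : z₂ / z₁ < 0 := div_neg_of_pos_of_neg hz₂ hz₁
    rw [hz₂₁]; linarith
  set ε : ℝ := z₃₁ / 4 - 1 with hε
  have hεpos : 0 < ε := by simp only [hε]; linarith
  set y : ℝ := 7 / ε + 1 with hy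
  have hfrac : 0 < 7 / ε := by positivity
  have hy1 : 1 ≤ y := by rw [hy]; linarith
  have hypos : 0 < y := by linarith
  have hεy : ε * y = 7 + ε := by
    rw [hy]; field_simp
  have hA₀pos : 0 < A₀ := by
    rw [hA₀]
    have h1 : (0:ℝ) < (3/2 : ℝ) ^ ((2:ℝ)/3) := Real.rpow_pos_of_pos (by norm_num) _
    have h2 : (0:ℝ) < E₀ ^ ((2:ℝ)/3) := Real.rpow_pos_of_pos hE₀ _
    have h3 : (0:ℝ) < (z₂ ^ 2 * z₂₁) ^ ((1:ℝ)/3) :=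
      Real.rpow_pos_of_pos (by positivity) _
    positivity
  have hEE : (0:ℝ) < E₀ + E₁ := by linarith
  have hz₃₁pos : 0 < z₃₁ := by linarith
  have hB₀pos : 0 < B₀ := by
    rw [hB₀]
    have h1 : (0:ℝ) < (3/2 : ℝ) ^ ((2:ℝ)/3) := Real.rpow_pos_of_pos (by norm_num) _
    have h2 : (0:ℝ) < (E₀ + E₁) ^ ((2:ℝ)/3) := Real.rpow_pos_of_pos hEE _
    have h3 : (0:ℝ) < (z₃ ^ 2 * z₃₁) ^ ((1:ℝ)/3) :=
      Real.rpow_pos_of_pos (by positivity) _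
    positivity
  have hB₀cube : B₀ ^ 3 = (9/4) * (E₀ + E₁) ^ 2 * (z₃ ^ 2 * z₃₁) := by
    rw [hB₀, mul_pow, mul_pow, cube23 _ (by norm_num), cube23 _ hEE.le,
      cube13 _ (by positivity)]
    ring
  refine ⟨y, hypos.le, ?_⟩
  have hpoly := auxpoly z₂ z₃ ε y hz₂ hz₂₃ hεpos hy1 hεy
  have h9 : (0:ℝ) < 9 * (E₀ + E₁) ^ 2 := by positivity
  have hmul := mul_lt_mul_of_pos_left hpoly h9
  have hz₃₁e : z₃₁ = 4 * (1 + ε) := by rw [hε]; ring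
  have key : 9 * (E₀ + E₁) ^ 2 * (z₂ ^ 2 + y ^ 3 * z₃ ^ 2 + 3 * y * z₂ * (y * z₃ + z₂))
      < (B₀ * y) ^ 3 := by
    rw [mul_pow, hB₀cube, hz₃₁e]
    exact hmul.trans_eq (by ring)
  have step : (B₀ * y) ^ 3 < (A₀ + B₀ * y) ^ 3 := by
    have h1 : B₀ * y < A₀ + B₀ * y := by linarith
    exact pow_lt_pow_left₀ h1 (by positivity) (by norm_num)
  linarith
end

section
/- Let z₁ < 0 < z₂ < z₃ be real numbers and E₀, E₁ > 0. Set z₂₁ = 1 − z₂/z₁, z₃₁ = 1 − z₃/z₁, A₀ = (3/2)^{2/3} E₀^{2/3} (z₂² z₂₁)^{1/3}, K = (z₃₁/z₂₁)·((E₀+E₁)/E₀)^{2/3}, f₇(y) = (9/4)(E₀+2E₁)²(z₂²z₂₁ + y³z₃²z₃₁ + 3yz₂z₃₁(yz₃+z₂)), and f₈(y) = 9(E₀+E₁)²(z₂²z₂₁ + y³z₃²z₃₁ − 3(y²z₃₁z₃ − z₂z₂₁)²/(4(z₂₁+yz₃₁))). Then for every y ≥ 0, f₇(y)^{1/3} ≥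 A₀ + K·A₀·y and f₈(y)^{1/3} ≥ A₀ + K·A₀·y. -/
set_option maxHeartbeats 1000000 in
/-- Inequality (6.2) of the paper: for all `y ≥ 0`,
`f₇(y)^{1/3} ≥ A₀ + K A₀ y` and `f₈(y)^{1/3} ≥ A₀ + K A₀ y`. -/
theorem statement18
    (z₁ z₂ z₃ E₀ E₁ z₂₁ z₃₁ A₀ K : ℝ)
    (hz₁ : z₁ < 0) (hz₂ : 0 < z₂) (hz₂₃ : z₂ < z₃)
    (hE₀ : 0 < E₀) (hE₁ : 0 < E₁)
    (hz₂₁ : z₂₁ = 1 - z₂ / z₁) (hz₃₁ : z₃₁ = 1 - z₃ / z₁)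
    (hA₀ : A₀ = (3/2 : ℝ) ^ ((2:ℝ)/3) * E₀ ^ ((2:ℝ)/3) * (z₂ ^ 2 * z₂₁) ^ ((1:ℝ)/3))
    (hK : K = (z₃₁ / z₂₁) * ((E₀ + E₁) / E₀) ^ ((2:ℝ)/3)) :
    ∀ y : ℝ, 0 ≤ y →
      A₀ + K * A₀ * y ≤
        ((9 / 4) * (E₀ + 2 * E₁) ^ 2 *
          (z₂ ^ 2 * z₂₁ + y ^ 3 * z₃ ^ 2 * z₃₁ +
            3 * y * z₂ * z₃₁ * (y * z₃ + z₂))) ^ ((1:ℝ)/3) ∧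
      A₀ + K * A₀ * y ≤
        (9 * (E₀ + E₁) ^ 2 *
          (z₂ ^ 2 * z₂₁ + y ^ 3 * z₃ ^ 2 * z₃₁ -
            3 * (y ^ 2 * z₃₁ * z₃ - z₂ * z₂₁) ^ 2 /
              (4 * (z₂₁ + y * z₃₁)))) ^ ((1:ℝ)/3) := by
  intro y hy
  have hz₃ : 0 < z₃ := hz₂.trans hz₂₃
  have hz₁' : z₁ ≠ 0 := ne_of_lt hz₁
  have h21 : 0 < z₂₁ := by
    have : z₂ / z₁ < 0 := div_neg_of_pos_of_neg hz₂ hz₁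
    rw [hz₂₁]; linarith
  have h31 : 0 < z₃₁ := by
    have : z₃ / z₁ < 0 := div_neg_of_pos_of_neg hz₃ hz₁
    rw [hz₃₁]; linarith
  have hs : 0 ≤ z₃ * z₂₁ - z₂ * z₃₁ := by
    have h : z₃ * z₂₁ - z₂ * z₃₁ = z₃ - z₂ := by
      rw [hz₂₁, hz₃₁]; field_simp; ring
    rw [h]; linarith
  have hw : (0:ℝ) ≤ z₂ ^ 2 * z₂₁ := by positivity
  set r : ℝ := z₃₁ / z₂₁ with hr
  have hrpos : 0 < r := div_pos h31 h21
  have hK0 : 0 ≤ K := by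
    rw [hK]; positivity
  -- cube identities for rpow
  have c1 : ∀ x : ℝ, 0 ≤ x → (x ^ ((2:ℝ)/3)) ^ 3 = x ^ 2 := by
    intro x hx
    rw [← Real.rpow_natCast (x ^ ((2:ℝ)/3)) 3, ← Real.rpow_mul hx,
      show (2:ℝ)/3 * ((3:ℕ):ℝ) = ((2:ℕ):ℝ) by push_cast; ring, Real.rpow_natCast]
  have c2 : ∀ x : ℝ, 0 ≤ x → (x ^ ((1:ℝ)/3)) ^ 3 = x := by
    intro x hx
    rw [← Real.rpow_natCast (x ^ ((1:ℝ)/3)) 3, ← Real.rpow_mul hx,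
      show (1:ℝ)/3 * ((3:ℕ):ℝ) = 1 by push_cast; ring, Real.rpow_one]
  have c3 : ∀ x : ℝ, 0 ≤ x → (x ^ 3) ^ ((1:ℝ)/3) = x := by
    intro x hx
    rw [← Real.rpow_natCast x 3, ← Real.rpow_mul hx,
      show ((3:ℕ):ℝ) * (1/3) = 1 by push_cast; ring, Real.rpow_one]
  have hA0 : 0 ≤ A₀ := by rw [hA₀]; positivity
  have ha : 0 ≤ A₀ + K * A₀ * y :=
    add_nonneg hA0 (mul_nonneg (mul_nonneg hK0 hA0) hy)
  have hA3 : A₀ ^ 3 = 9/4 * E₀ ^ 2 * (z₂ ^ 2 * z₂₁) := by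
    rw [hA₀, mul_pow, mul_pow, c1 (3/2) (by norm_num), c1 E₀ hE₀.le,
      c2 _ hw]
    norm_num
  have hPK : E₀ ^ ((2:ℝ)/3) * K = r * (E₀ + E₁) ^ ((2:ℝ)/3) := by
    rw [hK, Real.div_rpow (by positivity) hE₀.le]
    have hne : E₀ ^ ((2:ℝ)/3) ≠ 0 := by positivity
    field_simp
  have hPQ : E₀ ^ ((2:ℝ)/3) ≤ (E₀ + E₁) ^ ((2:ℝ)/3) :=
    Real.rpow_le_rpow hE₀.le (by linarith) (by norm_num)
  -- the master bound on the cube of the LHS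
  have hstep : (A₀ + K * A₀ * y) ^ 3
      ≤ 9/4 * (E₀ + E₁) ^ 2 * (z₂ ^ 2 * z₂₁) * (1 + r * y) ^ 3 := by
    have h2 : E₀ ^ ((2:ℝ)/3) * (1 + K * y)
        = E₀ ^ ((2:ℝ)/3) + r * (E₀ + E₁) ^ ((2:ℝ)/3) * y := by
      rw [← hPK]; ring
    have h1 : E₀ ^ ((2:ℝ)/3) * (1 + K * y)
        ≤ (E₀ + E₁) ^ ((2:ℝ)/3) * (1 + r * y) := by
      rw [h2]
      nlinarith [hPQ, mul_nonneg hrpos.le hy]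
    have h3 : (E₀ ^ ((2:ℝ)/3) * (1 + K * y)) ^ 3
        ≤ ((E₀ + E₁) ^ ((2:ℝ)/3) * (1 + r * y)) ^ 3 := by
      apply pow_le_pow_left₀ (by positivity) h1
    calc (A₀ + K * A₀ * y) ^ 3 = A₀ ^ 3 * (1 + K * y) ^ 3 := by ring
      _ = 9/4 * (z₂ ^ 2 * z₂₁) * (E₀ ^ ((2:ℝ)/3) * (1 + K * y)) ^ 3 := by
          rw [mul_pow, c1 E₀ hE₀.le, hA3]; ring
      _ ≤ 9/4 * (z₂ ^ 2 * z₂₁) * ((E₀ + E₁) ^ ((2:ℝ)/3) * (1 + r * y)) ^ 3 := by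
          apply mul_le_mul_of_nonneg_left h3 (by positivity)
      _ = 9/4 * (E₀ + E₁) ^ 2 * (z₂ ^ 2 * z₂₁) * (1 + r * y) ^ 3 := by
          rw [mul_pow, c1 (E₀ + E₁) (by positivity)]; ring
  have fin : ∀ X : ℝ, (A₀ + K * A₀ * y) ^ 3 ≤ X →
      A₀ + K * A₀ * y ≤ X ^ ((1:ℝ)/3) := by
    intro X hX
    calc A₀ + K * A₀ * y = ((A₀ + K * A₀ * y) ^ 3) ^ ((1:ℝ)/3) := (c3 _ ha).symm
      _ ≤ X ^ ((1:ℝ)/3) := Real.rpow_le_rpow (by positivity) hX (by norm_num)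
  have hTpos : 0 < z₂₁ + y * z₃₁ := by positivity
  constructor
  · -- f₇
    apply fin
    refine hstep.trans ?_
    have poly : (z₂ ^ 2 * z₂₁) * (1 + r * y) ^ 3
        ≤ z₂ ^ 2 * z₂₁ + y ^ 3 * z₃ ^ 2 * z₃₁ + 3 * y * z₂ * z₃₁ * (y * z₃ + z₂) := by
      have expand : (z₂ ^ 2 * z₂₁) * (1 + r * y) ^ 3
          = z₂ ^ 2 * (z₂₁ + y * z₃₁) ^ 3 / z₂₁ ^ 2 := by
        rw [hr]; field_simp
      rw [expand, div_le_iff₀ (by positivity)]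
      have fid : (z₂ ^ 2 * z₂₁ + y ^ 3 * z₃ ^ 2 * z₃₁ + 3 * y * z₂ * z₃₁ * (y * z₃ + z₂))
            * z₂₁ ^ 2 - z₂ ^ 2 * (z₂₁ + y * z₃₁) ^ 3
          = 3 * (z₂₁ * z₂ * z₃₁) * (z₃ * z₂₁ - z₂ * z₃₁) * y ^ 2
            + z₃₁ * (z₃ * z₂₁ - z₂ * z₃₁) * (z₃ * z₂₁ + z₂ * z₃₁) * y ^ 3 := by ring
      have t1 : 0 ≤ 3 * (z₂₁ * z₂ * z₃₁) * (z₃ * z₂₁ - z₂ * z₃₁) * y ^ 2 := by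
        apply mul_nonneg (mul_nonneg (by positivity) hs) (sq_nonneg y)
      have t2 : 0 ≤ z₃₁ * (z₃ * z₂₁ - z₂ * z₃₁) * (z₃ * z₂₁ + z₂ * z₃₁) * y ^ 3 := by
        apply mul_nonneg (mul_nonneg (mul_nonneg h31.le hs) (by positivity))
          (pow_nonneg hy 3)
      linarith [fid, t1, t2]
    have hbig : (0:ℝ) ≤ z₂ ^ 2 * z₂₁ + y ^ 3 * z₃ ^ 2 * z₃₁
        + 3 * y * z₂ * z₃₁ * (y * z₃ + z₂) :=
      le_trans (by positivity) poly
    have e1 : (E₀ + E₁) ^ 2 ≤ (E₀ + 2 * E₁) ^ 2 := by nlinarith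
    calc 9/4 * (E₀ + E₁) ^ 2 * (z₂ ^ 2 * z₂₁) * (1 + r * y) ^ 3
        = (9/4 * (E₀ + E₁) ^ 2) * ((z₂ ^ 2 * z₂₁) * (1 + r * y) ^ 3) := by ring
      _ ≤ (9/4 * (E₀ + E₁) ^ 2) *
          (z₂ ^ 2 * z₂₁ + y ^ 3 * z₃ ^ 2 * z₃₁ + 3 * y * z₂ * z₃₁ * (y * z₃ + z₂)) :=
          mul_le_mul_of_nonneg_left poly (by positivity)
      _ ≤ 9/4 * (E₀ + 2 * E₁) ^ 2 *
          (z₂ ^ 2 * z₂₁ + y ^ 3 * z₃ ^ 2 * z₃₁ + 3 * y * z₂ * z₃₁ * (y * z₃ + z₂)) :=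
          mul_le_mul_of_nonneg_right (by linarith) hbig
  · -- f₈
    apply fin
    refine hstep.trans ?_
    have hQ : z₂ ^ 2 * (z₂₁ + y * z₃₁) ^ 4
          + 3 * z₂₁ ^ 2 * (y ^ 2 * z₃₁ * z₃ - z₂ * z₂₁) ^ 2
        ≤ 4 * z₂₁ ^ 2 * (z₂₁ + y * z₃₁) * (z₂ ^ 2 * z₂₁ + y ^ 3 * z₃ ^ 2 * z₃₁) := by
      have factor : 4 * z₂₁ ^ 2 * (z₂₁ + y * z₃₁) * (z₂ ^ 2 * z₂₁ + y ^ 3 * z₃ ^ 2 * z₃₁)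
          - (z₂ ^ 2 * (z₂₁ + y * z₃₁) ^ 4
            + 3 * z₂₁ ^ 2 * (y ^ 2 * z₃₁ * z₃ - z₂ * z₂₁) ^ 2)
          = y ^ 2 * (z₃ * z₂₁ - z₂ * z₃₁) *
            (y ^ 2 * z₃₁ ^ 2 * (z₃ * z₂₁ + z₂ * z₃₁)
              + 4 * y * z₂₁ * z₃₁ * (z₃ * z₂₁ + z₂ * z₃₁)
              + 6 * z₂₁ ^ 2 * z₃₁ * z₂) := by ring
      have h0 : 0 ≤ y ^ 2 * (z₃ * z₂₁ - z₂ * z₃₁) *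
            (y ^ 2 * z₃₁ ^ 2 * (z₃ * z₂₁ + z₂ * z₃₁)
              + 4 * y * z₂₁ * z₃₁ * (z₃ * z₂₁ + z₂ * z₃₁)
              + 6 * z₂₁ ^ 2 * z₃₁ * z₂) := by
        apply mul_nonneg (mul_nonneg (sq_nonneg y) hs)
        positivity
      linarith [factor, h0]
    rw [← sub_nonneg]
    have key : 9 * (E₀ + E₁) ^ 2 *
          (z₂ ^ 2 * z₂₁ + y ^ 3 * z₃ ^ 2 * z₃₁ -
            3 * (y ^ 2 * z₃₁ * z₃ - z₂ * z₂₁) ^ 2 / (4 * (z₂₁ + y * z₃₁)))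
        - 9/4 * (E₀ + E₁) ^ 2 * (z₂ ^ 2 * z₂₁) * (1 + r * y) ^ 3
        = 9 * (E₀ + E₁) ^ 2 *
          ((4 * z₂₁ ^ 2 * (z₂₁ + y * z₃₁) * (z₂ ^ 2 * z₂₁ + y ^ 3 * z₃ ^ 2 * z₃₁)
            - (z₂ ^ 2 * (z₂₁ + y * z₃₁) ^ 4
              + 3 * z₂₁ ^ 2 * (y ^ 2 * z₃₁ * z₃ - z₂ * z₂₁) ^ 2))
            / (4 * (z₂₁ + y * z₃₁) * z₂₁ ^ 2)) := by
      rw [hr]; field_simp; ring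
    rw [key]
    apply mul_nonneg (by positivity)
    apply div_nonneg (by linarith) (by positivity)
end
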